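/- arXiv:math/0410207 — 4 statements merged into one kernel-verified Lean document; each statement's English description precedes it below -/
import Mathlib

section
/- Let a > 0 and 0 < α < 2π. There exists a constant C > 0, depending only on α, such that for every function f : (0,a) × [0,α] → ℝ that is continuous, continuously differentiable in the second variable, and satisfies f(r,0) = f(r,α) = 0 for all r ∈ (0,a), one has ∫₀^a ∫₀^α f(r,θ)²/r dθ dr ≤ C ∫₀^a ∫₀^α (∂f/∂θ)(r,θ)²/r dθ dr (an inequality in the extended nonnegative reals). -/
open MeasureTheory Set Real

/-- Cauchy–Schwarz for set integrals on the real line. -/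
lemma cs_aux {s : Set ℝ} (hfin : volume s ≠ ⊤) {h : ℝ → ℝ}
    (hm : AEStronglyMeasurable h (volume.restrict s))
    (hi2 : Integrable (fun t => h t ^ 2) (volume.restrict s)) :
    (∫ t in s, |h t|) ^ 2 ≤ (volume s).toReal * ∫ t in s, h t ^ 2 := by
  haveI : IsFiniteMeasure (volume.restrict s) :=
    ⟨by rw [Measure.restrict_apply_univ]; exact lt_top_iff_ne_top.2 hfin⟩
  have hpq : Real.HolderConjugate 2 2 := Real.HolderConjugate.two_two
  have habs : (fun t => |h t|) = fun t => ‖h t‖ := by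
    funext t; rw [Real.norm_eq_abs]
  have hf : MemLp (fun t => |h t|) (ENNReal.ofReal 2) (volume.restrict s) := by
    rw [show ENNReal.ofReal 2 = 2 by norm_num, habs]
    rw [memLp_two_iff_integrable_sq hm.norm]
    refine hi2.congr ?_
    filter_upwards with t
    rw [Real.norm_eq_abs, sq_abs]
  have hg : MemLp (fun _ : ℝ => (1 : ℝ)) (ENNReal.ofReal 2) (volume.restrict s) :=
    memLp_const 1
  have H := integral_mul_le_Lp_mul_Lq_of_nonneg hpq
    (Filter.Eventually.of_forall fun t => abs_nonneg (h t))
    (Filter.Eventually.of_forall fun _ => zero_le_one) hf hg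
  simp only [mul_one] at H
  have e1 : (∫ t in s, |h t| ^ (2 : ℝ)) = ∫ t in s, h t ^ 2 := by
    refine integral_congr_ae (Filter.Eventually.of_forall fun t => ?_)
    simp only [Real.rpow_two, sq_abs]
  have e2 : (∫ _ in s, (1:ℝ) ^ (2 : ℝ)) = (volume s).toReal := by
    simp [Measure.real]
  rw [e1, e2] at H
  have hInn : 0 ≤ ∫ t in s, h t ^ 2 :=
    integral_nonneg fun t => sq_nonneg _
  have hμ : 0 ≤ (volume s).toReal := ENNReal.toReal_nonneg
  calc (∫ t in s, |h t|) ^ 2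
      ≤ ((∫ t in s, h t ^ 2) ^ (1/2 : ℝ) * (volume s).toReal ^ (1/2 : ℝ)) ^ 2 := by
        apply pow_le_pow_left₀ (integral_nonneg fun t => abs_nonneg _) H
    _ = (volume s).toReal * ∫ t in s, h t ^ 2 := by
        rw [mul_pow, ← Real.rpow_natCast ((∫ t in s, h t ^ 2) ^ (1/2:ℝ)) 2,
          ← Real.rpow_natCast ((volume s).toReal ^ (1/2:ℝ)) 2,
          ← Real.rpow_mul hInn, ← Real.rpow_mul hμ]
        norm_num
        rw [mul_comm]

/-- One-variable Poincaré inequality on `(0, α)` with vanishing left endpoint value. -/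
lemma key_aux (α : ℝ) (hα : 0 < α) (g : ℝ → ℝ)
    (hg : ContDiffOn ℝ 1 g (Icc 0 α)) (h0 : g 0 = 0) :
    ∫⁻ θ in Ioo 0 α, ENNReal.ofReal (g θ ^ 2) ≤
      ENNReal.ofReal (α ^ 2) * ∫⁻ θ in Ioo 0 α, ENNReal.ofReal (deriv g θ ^ 2) := by
  set h : ℝ → ℝ := derivWithin g (Icc 0 α) with hh
  have hudiff : UniqueDiffOn ℝ (Icc (0:ℝ) α) := uniqueDiffOn_Icc hα
  have hcont_h : ContinuousOn h (Icc 0 α) :=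
    hg.continuousOn_derivWithin hudiff le_rfl
  have hcont_g : ContinuousOn g (Icc 0 α) := hg.continuousOn
  -- h agrees with deriv g on the interior
  have hagree : ∀ t ∈ Ioo (0:ℝ) α, h t = deriv g t := by
    intro t ht
    exact derivWithin_of_mem_nhds (Icc_mem_nhds ht.1 ht.2)
  -- FTC
  have hFTC : ∀ θ ∈ Icc (0:ℝ) α, g θ = ∫ t in (0:ℝ)..θ, h t := by
    intro θ hθ
    have hint : IntervalIntegrable h volume 0 θ := by
      apply ContinuousOn.intervalIntegrable
      rw [uIcc_of_le hθ.1]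
      exact hcont_h.mono (Icc_subset_Icc le_rfl hθ.2)
    have := intervalIntegral.integral_eq_sub_of_hasDeriv_right_of_le hθ.1
      (hcont_g.mono (Icc_subset_Icc le_rfl hθ.2))
      (fun t ht => ?_) hint
    · rw [this, h0, sub_zero]
    · have ht' : t ∈ Ioo (0:ℝ) α := ⟨ht.1, lt_of_lt_of_le ht.2 hθ.2⟩
      have hd : DifferentiableAt ℝ g t :=
        ((hg.differentiableOn one_ne_zero) t (Ioo_subset_Icc_self ht')).differentiableAt
          (Icc_mem_nhds ht'.1 ht'.2)
      rw [hagree t ht']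
      exact hd.hasDerivAt.hasDerivWithinAt
  -- integrability of h^2 on Ioc 0 α
  have hi2 : IntegrableOn (fun t => h t ^ 2) (Ioc 0 α) volume := by
    exact ((hcont_h.pow 2).integrableOn_compact isCompact_Icc).mono_set Ioc_subset_Icc_self
  set I : ℝ := ∫ t in Ioc (0:ℝ) α, h t ^ 2 with hI
  have hInonneg : 0 ≤ I := integral_nonneg fun t => sq_nonneg _
  -- pointwise bound
  have hpt : ∀ θ ∈ Icc (0:ℝ) α, g θ ^ 2 ≤ α * I := by
    intro θ hθ
    have hmeas : AEStronglyMeasurable h (volume.restrict (Ioc 0 θ)) :=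
      (hcont_h.mono (Icc_subset_Icc le_rfl hθ.2) |>.mono Ioc_subset_Icc_self).aestronglyMeasurable
        measurableSet_Ioc
    have hi2' : Integrable (fun t => h t ^ 2) (volume.restrict (Ioc 0 θ)) :=
      hi2.mono_set (Ioc_subset_Ioc le_rfl hθ.2)
    have hcs := cs_aux measure_Ioc_lt_top.ne hmeas hi2'
    have habs : |g θ| ≤ ∫ t in Ioc 0 θ, |h t| := by
      rw [hFTC θ hθ, intervalIntegral.integral_of_le hθ.1]
      calc |∫ t in Ioc 0 θ, h t| = ‖∫ t in Ioc 0 θ, h t‖ := (Real.norm_eq_abs _).symm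
        _ ≤ ∫ t in Ioc 0 θ, ‖h t‖ := norm_integral_le_integral_norm _
        _ = ∫ t in Ioc 0 θ, |h t| := by simp [Real.norm_eq_abs]
    have h1 : g θ ^ 2 ≤ (∫ t in Ioc 0 θ, |h t|) ^ 2 := by
      rw [← sq_abs]
      exact pow_le_pow_left₀ (abs_nonneg _) habs 2
    have h2 : (volume (Ioc (0:ℝ) θ)).toReal * (∫ t in Ioc 0 θ, h t ^ 2) ≤ α * I := by
      apply mul_le_mul
      · rw [Real.volume_Ioc]
        rw [sub_zero, ENNReal.toReal_ofReal hθ.1]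
        exact hθ.2
      · exact setIntegral_mono_set hi2 (Filter.Eventually.of_forall fun t => sq_nonneg _)
          (HasSubset.Subset.eventuallyLE (Ioc_subset_Ioc le_rfl hθ.2))
      · exact integral_nonneg fun t => sq_nonneg _
      · linarith [hα]
    exact h1.trans (hcs.trans h2)
  -- integrate the pointwise bound
  have hgint : IntegrableOn (fun θ => g θ ^ 2) (Ioo 0 α) volume := by
    exact ((hcont_g.pow 2).integrableOn_compact isCompact_Icc).mono_set Ioo_subset_Icc_self
  have hmain : (∫ θ in Ioo 0 α, g θ ^ 2) ≤ α ^ 2 * I := by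
    calc (∫ θ in Ioo 0 α, g θ ^ 2) ≤ ∫ _ in Ioo (0:ℝ) α, α * I := by
          apply setIntegral_mono_on hgint (integrableOn_const measure_Ioo_lt_top.ne)
            measurableSet_Ioo
          intro θ hθ
          exact hpt θ (Ioo_subset_Icc_self hθ)
      _ = α ^ 2 * I := by
          rw [setIntegral_const, Real.volume_real_Ioo_of_le hα.le, sub_zero,
            smul_eq_mul, ← mul_assoc, sq]
  -- pass to lintegrals
  have hL1 : ∫⁻ θ in Ioo 0 α, ENNReal.ofReal (g θ ^ 2) = ENNReal.ofReal (∫ θ in Ioo 0 α, g θ ^ 2) :=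
    (ofReal_integral_eq_lintegral_ofReal hgint
      (Filter.Eventually.of_forall fun θ => sq_nonneg _)).symm
  have hL2 : ∫⁻ θ in Ioo 0 α, ENNReal.ofReal (deriv g θ ^ 2) = ENNReal.ofReal I := by
    have e0 : ∫⁻ θ in Ioo 0 α, ENNReal.ofReal (deriv g θ ^ 2)
        = ∫⁻ θ in Ioo 0 α, ENNReal.ofReal (h θ ^ 2) := by
      refine setLIntegral_congr_fun measurableSet_Ioo (fun θ hθ => ?_)
      rw [hagree θ hθ]
    have e1 : ∫⁻ θ in Ioo 0 α, ENNReal.ofReal (h θ ^ 2)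
        = ∫⁻ θ in Ioc 0 α, ENNReal.ofReal (h θ ^ 2) := by
      apply setLIntegral_congr
      exact Ioo_ae_eq_Ioc
    rw [e0, e1, ← ofReal_integral_eq_lintegral_ofReal hi2
      (Filter.Eventually.of_forall fun θ => sq_nonneg _)]
  rw [hL1, hL2, ← ENNReal.ofReal_mul (by positivity)]
  exact ENNReal.ofReal_le_ofReal hmain

/-- One–variable Poincaré inequality in the angular variable, integrated against the
polar-coordinate weight `1/r` on the wedge `(0,a) × (0,α)`. The constant depends
only on the opening angle `α`. -/
theorem poincare_wedge_polar (α : ℝ) (hα : 0 < α) (hα' : α < 2 * Real.pi) :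
    ∃ C : ℝ, 0 < C ∧ ∀ a : ℝ, 0 < a → ∀ f : ℝ → ℝ → ℝ,
      ContinuousOn (Function.uncurry f) (Ioo 0 a ×ˢ Icc 0 α) →
      (∀ r ∈ Ioo (0 : ℝ) a, ContDiffOn ℝ 1 (f r) (Icc 0 α)) →
      (∀ r ∈ Ioo (0 : ℝ) a, f r 0 = 0 ∧ f r α = 0) →
      (∫⁻ r in Ioo (0 : ℝ) a, ∫⁻ θ in Ioo (0 : ℝ) α,
          ENNReal.ofReal (f r θ ^ 2 / r)) ≤
        ENNReal.ofReal C * ∫⁻ r in Ioo (0 : ℝ) a, ∫⁻ θ in Ioo (0 : ℝ) α,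
          ENNReal.ofReal (deriv (f r) θ ^ 2 / r) := by
  refine ⟨α ^ 2, by positivity, fun a ha f _ hfd hfb => ?_⟩
  have step : ∀ r ∈ Ioo (0 : ℝ) a,
      (∫⁻ θ in Ioo (0 : ℝ) α, ENNReal.ofReal (f r θ ^ 2 / r)) ≤
        ENNReal.ofReal (α ^ 2) * ∫⁻ θ in Ioo (0 : ℝ) α, ENNReal.ofReal (deriv (f r) θ ^ 2 / r) := by
    intro r hr
    have hr0 : (0:ℝ) < r := hr.1
    have ekey := key_aux α hα (f r) (hfd r hr) (hfb r hr).1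
    have ediv : ∀ x : ℝ, ENNReal.ofReal (x ^ 2 / r)
        = ENNReal.ofReal (x ^ 2) * ENNReal.ofReal r⁻¹ := by
      intro x
      rw [div_eq_mul_inv, ENNReal.ofReal_mul (sq_nonneg x)]
    simp only [ediv]
    rw [lintegral_mul_const' _ _ ENNReal.ofReal_ne_top,
      lintegral_mul_const' _ _ ENNReal.ofReal_ne_top, ← mul_assoc]
    exact mul_le_mul_left ekey _
  calc (∫⁻ r in Ioo (0 : ℝ) a, ∫⁻ θ in Ioo (0 : ℝ) α, ENNReal.ofReal (f r θ ^ 2 / r))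
      ≤ ∫⁻ r in Ioo (0 : ℝ) a, ENNReal.ofReal (α ^ 2) *
          ∫⁻ θ in Ioo (0 : ℝ) α, ENNReal.ofReal (deriv (f r) θ ^ 2 / r) := by
        refine lintegral_mono_ae ?_
        filter_upwards [ae_restrict_mem measurableSet_Ioo] with r hr
        exact step r hr
    _ = ENNReal.ofReal (α ^ 2) * ∫⁻ r in Ioo (0 : ℝ) a,
          ∫⁻ θ in Ioo (0 : ℝ) α, ENNReal.ofReal (deriv (f r) θ ^ 2 / r) :=
        lintegral_const_mul' _ _ ENNReal.ofReal_ne_top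
end

section
/- Let a > 0 and 0 < α < 2π, and let W = {(r cos θ, r sin θ) : 0 < r < a, 0 < θ < α} ⊂ ℝ² be the open circular sector of radius a and opening angle α. There exists a constant C > 0, depending only on α, such that for every function u : ℝ² → ℝ that is continuously differentiable on an open neighborhood of the closure of W and vanishes on the two straight edges {(r, 0) : 0 ≤ r ≤ a} and {(r cos α, r sin α) : 0 ≤ r ≤ a}, one has ∫_W u(x)²/‖x‖² dx ≤ C ∫_W ‖∇u(x)‖² dx (an inequality in the extended nonnegative reals). -/
open MeasureTheory Set Real
open scoped ENNReal

/-- The open circular sector of radius `a` and opening angle `α`, with vertex at the origin. -/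
def planeSector (a α : ℝ) : Set (EuclideanSpace ℝ (Fin 2)) :=
  {x | ∃ r θ : ℝ, 0 < r ∧ r < a ∧ 0 < θ ∧ θ < α ∧
    x = ![r * Real.cos θ, r * Real.sin θ]}

noncomputable section HardyAux

def vec2 (a b : ℝ) : EuclideanSpace ℝ (Fin 2) := !₂[a, b]

lemma vec2_eq (a b : ℝ) : vec2 a b = ![a, b] := rfl

lemma gradient_norm_eq (u : EuclideanSpace ℝ (Fin 2) → ℝ) (y : EuclideanSpace ℝ (Fin 2)) :
    ‖gradient u y‖ = ‖fderiv ℝ u y‖ := by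
  have h : gradient u y
      = (InnerProductSpace.toDual ℝ (EuclideanSpace ℝ (Fin 2))).symm (fderiv ℝ u y) := rfl
  rw [h, LinearIsometryEquiv.norm_map]

lemma gradient_continuousOn {u : EuclideanSpace ℝ (Fin 2) → ℝ}
    {U : Set (EuclideanSpace ℝ (Fin 2))} (hUo : IsOpen U)
    (hcd : ContDiffOn ℝ 1 u U) : ContinuousOn (fun y => gradient u y) U := by
  have h : ∀ y, gradient u y
      = (InnerProductSpace.toDual ℝ (EuclideanSpace ℝ (Fin 2))).symm (fderiv ℝ u y) :=
    fun _ => rfl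
  simp_rw [h]
  exact (InnerProductSpace.toDual ℝ (EuclideanSpace ℝ (Fin 2))).symm.continuous.comp_continuousOn
    (hcd.continuousOn_fderiv_of_isOpen hUo le_rfl)

lemma hasDerivAt_arc (r θ : ℝ) :
    HasDerivAt (fun t : ℝ => vec2 (r * Real.cos t) (r * Real.sin t))
      (vec2 (-(r * Real.sin θ)) (r * Real.cos θ)) θ := by
  set e := PiLp.continuousLinearEquiv 2 ℝ (fun _ : Fin 2 => ℝ) with he
  have h0 : HasDerivAt (fun t : ℝ => (![r * Real.cos t, r * Real.sin t] : Fin 2 → ℝ))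
      (![-(r * Real.sin θ), r * Real.cos θ]) θ := by
    rw [hasDerivAt_pi]
    intro i
    fin_cases i
    · simpa [mul_comm] using ((Real.hasDerivAt_cos θ).const_mul r)
    · simpa [mul_comm] using ((Real.hasDerivAt_sin θ).const_mul r)
  exact (e.symm.toContinuousLinearMap.hasFDerivAt.comp_hasDerivAt θ h0 : _)

lemma norm_vec2 (a b : ℝ) : ‖vec2 a b‖ = Real.sqrt (a ^ 2 + b ^ 2) := by
  rw [EuclideanSpace.norm_eq]
  congr 1
  simp [vec2_eq, Fin.sum_univ_two, sq_abs]

lemma norm_arc_deriv (r θ : ℝ) (hr : 0 ≤ r) :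
    ‖vec2 (-(r * Real.sin θ)) (r * Real.cos θ)‖ = r := by
  rw [norm_vec2, show (-(r * Real.sin θ)) ^ 2 + (r * Real.cos θ) ^ 2 = r ^ 2 by
    nlinarith [Real.sin_sq_add_cos_sq θ]]
  exact Real.sqrt_sq hr

lemma norm_arc (r θ : ℝ) (hr : 0 ≤ r) :
    ‖vec2 (r * Real.cos θ) (r * Real.sin θ)‖ = r := by
  rw [norm_vec2, show (r * Real.cos θ) ^ 2 + (r * Real.sin θ) ^ 2 = r ^ 2 by
    nlinarith [Real.sin_sq_add_cos_sq θ]]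
  exact Real.sqrt_sq hr

lemma continuous_vec2 {X : Type*} [TopologicalSpace X] {f g : X → ℝ}
    (hf : Continuous f) (hg : Continuous g) :
    Continuous (fun t => vec2 (f t) (g t)) := by
  set e := PiLp.continuousLinearEquiv 2 ℝ (fun _ : Fin 2 => ℝ) with he
  have h0 : Continuous (fun t : X => (![f t, g t] : Fin 2 → ℝ)) := by
    apply continuous_pi
    intro i; fin_cases i
    · simpa using hf
    · simpa using hg
  exact e.symm.continuous.comp h0

lemma cs1d {b : ℝ} (hb : 0 < b) {m : ℝ → ℝ}
    (hm : IntegrableOn m (Ioo 0 b)) (hm2 : IntegrableOn (fun x => m x ^ 2) (Ioo 0 b)) :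
    (∫ x in Ioo 0 b, m x) ^ 2 ≤ b * ∫ x in Ioo 0 b, m x ^ 2 := by
  set I := ∫ x in Ioo 0 b, m x with hI
  set c := I / b with hc
  have hvol : (volume (Ioo 0 b)).toReal = b := by
    simp [Real.volume_Ioo, ENNReal.toReal_ofReal hb.le]
  have h0 : 0 ≤ ∫ x in Ioo 0 b, (m x - c) ^ 2 :=
    integral_nonneg fun x => sq_nonneg _
  have hexp : ∀ x, (m x - c) ^ 2 = m x ^ 2 - (2 * c) * m x + c ^ 2 := by intro x; ring
  have hint : (∫ x in Ioo 0 b, (m x - c) ^ 2)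
      = (∫ x in Ioo 0 b, m x ^ 2) - (2 * c) * I + c ^ 2 * b := by
    simp_rw [hexp]
    have h1 : IntegrableOn (fun x => m x ^ 2 - 2 * c * m x) (Ioo 0 b) :=
      hm2.sub (hm.const_mul (2 * c))
    have h2 : IntegrableOn (fun _ : ℝ => c ^ 2) (Ioo 0 b) :=
      integrableOn_const (by simp [Real.volume_Ioo])
    rw [integral_add h1 h2, integral_sub hm2 (hm.const_mul (2 * c)),
      MeasureTheory.integral_const_mul, integral_const]
    simp [hvol, smul_eq_mul, mul_comm]
    rw [max_eq_left hb.le]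
  rw [hint] at h0
  have hcb : c * b = I := by rw [hc, div_mul_cancel₀ I hb.ne']
  nlinarith [sq_nonneg c, sq_nonneg I]

lemma key1d {b r : ℝ} (hb : 0 < b) (hr : 0 < r)
    {u : EuclideanSpace ℝ (Fin 2) → ℝ} {U : Set (EuclideanSpace ℝ (Fin 2))} (hUo : IsOpen U)
    (hcd : ContDiffOn ℝ 1 u U)
    (harc : ∀ θ ∈ Icc (0:ℝ) b, vec2 (r * Real.cos θ) (r * Real.sin θ) ∈ U)
    (h0 : u (vec2 (r * Real.cos 0) (r * Real.sin 0)) = 0) :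
    ∫ θ in Ioo 0 b, (u (vec2 (r * Real.cos θ) (r * Real.sin θ))) ^ 2
      ≤ b ^ 2 * r ^ 2 * ∫ θ in Ioo 0 b, ‖gradient u (vec2 (r * Real.cos θ) (r * Real.sin θ))‖ ^ 2 := by
  set γ : ℝ → EuclideanSpace ℝ (Fin 2) := fun t => vec2 (r * Real.cos t) (r * Real.sin t)
    with hγdef
  set γ' : ℝ → EuclideanSpace ℝ (Fin 2) := fun t => vec2 (-(r * Real.sin t)) (r * Real.cos t)
    with hγ'def
  have hγc : Continuous γ := continuous_vec2 (by continuity) (by continuity)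
  have hγ'c : Continuous γ' := continuous_vec2 (by continuity) (by continuity)
  have hdiff : ∀ θ ∈ Icc (0:ℝ) b, DifferentiableAt ℝ u (γ θ) := fun θ hθ =>
    (hcd.differentiableOn one_ne_zero).differentiableAt (hUo.mem_nhds (harc θ hθ))
  set g' : ℝ → ℝ := fun t => fderiv ℝ u (γ t) (γ' t) with hg'def
  have hg : ∀ θ ∈ Icc (0:ℝ) b, HasDerivAt (fun t => u (γ t)) (g' θ) θ := fun θ hθ =>
    ((hdiff θ hθ).hasFDerivAt.comp_hasDerivAt θ (hasDerivAt_arc r θ))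
  have hfc : ContinuousOn (fderiv ℝ u) U := hcd.continuousOn_fderiv_of_isOpen hUo le_rfl
  have hfγ : ContinuousOn (fun t => fderiv ℝ u (γ t)) (Icc 0 b) :=
    hfc.comp hγc.continuousOn harc
  have hg'c : ContinuousOn g' (Icc 0 b) := hfγ.clm_apply hγ'c.continuousOn
  have hmc : ContinuousOn (fun t => ‖gradient u (γ t)‖) (Icc 0 b) :=
    (((gradient_continuousOn hUo hcd).comp hγc.continuousOn harc).norm)
  set m : ℝ → ℝ := fun t => r * ‖gradient u (γ t)‖ with hmdef
  have hmc' : ContinuousOn m (Icc 0 b) := continuousOn_const.mul hmc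
  have hm0 : ∀ t, 0 ≤ m t := fun t => mul_nonneg hr.le (norm_nonneg _)
  have hbound : ∀ t ∈ Icc (0:ℝ) b, |g' t| ≤ m t := by
    intro t ht
    have h1 : |g' t| = ‖fderiv ℝ u (γ t) (γ' t)‖ := rfl
    calc |g' t| ≤ ‖fderiv ℝ u (γ t)‖ * ‖γ' t‖ := by
          rw [h1]; exact (fderiv ℝ u (γ t)).le_opNorm _
      _ = r * ‖gradient u (γ t)‖ := by
          rw [hγ'def, norm_arc_deriv r t hr.le, gradient_norm_eq, mul_comm]
  have hftc : ∀ θ ∈ Icc (0:ℝ) b, u (γ θ) = ∫ t in (0:ℝ)..θ, g' t := by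
    intro θ hθ
    have hsub : uIcc (0:ℝ) θ ⊆ Icc 0 b := by
      rw [uIcc_of_le hθ.1]; exact Icc_subset_Icc le_rfl hθ.2
    have heq := intervalIntegral.integral_eq_sub_of_hasDerivAt
      (f := fun t => u (γ t)) (f' := g') (fun t ht => hg t (hsub ht))
      ((hg'c.mono hsub).intervalIntegrable)
    have h00 : u (γ 0) = 0 := h0
    rw [heq, h00, sub_zero]
  set B : ℝ := ∫ t in (0:ℝ)..b, m t with hBdef
  have hmint : IntervalIntegrable m volume 0 b :=
    (hmc'.mono (by rw [uIcc_of_le hb.le])).intervalIntegrable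
  have hB0 : 0 ≤ B := intervalIntegral.integral_nonneg hb.le (fun t _ => hm0 t)
  have hB : ∀ θ ∈ Icc (0:ℝ) b, |u (γ θ)| ≤ B := by
    intro θ hθ
    have hsub : uIcc (0:ℝ) θ ⊆ Icc 0 b := by
      rw [uIcc_of_le hθ.1]; exact Icc_subset_Icc le_rfl hθ.2
    have hg'int : IntervalIntegrable g' volume 0 θ := (hg'c.mono hsub).intervalIntegrable
    have hmintθ : IntervalIntegrable m volume 0 θ := (hmc'.mono hsub).intervalIntegrable
    rw [hftc θ hθ]
    calc |∫ t in (0:ℝ)..θ, g' t| ≤ ∫ t in (0:ℝ)..θ, |g' t| :=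
          intervalIntegral.abs_integral_le_integral_abs hθ.1
      _ ≤ ∫ t in (0:ℝ)..θ, m t := by
          apply intervalIntegral.integral_mono_on hθ.1 hg'int.abs hmintθ
          intro t ht
          exact hbound t ⟨ht.1, le_trans ht.2 hθ.2⟩
      _ ≤ B := by
          apply intervalIntegral.integral_mono_interval le_rfl hθ.1 hθ.2 _ hmint
          filter_upwards with t using hm0 t
  have huγc : ContinuousOn (fun θ => u (γ θ)) (Icc 0 b) :=
    hcd.continuousOn.comp hγc.continuousOn harc
  have hu2int : IntegrableOn (fun θ => (u (γ θ)) ^ 2) (Ioo 0 b) :=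
    ((huγc.pow 2).integrableOn_Icc).mono_set Ioo_subset_Icc_self
  have hstep1 : ∫ θ in Ioo 0 b, (u (γ θ)) ^ 2 ≤ b * B ^ 2 := by
    have hmono : ∫ θ in Ioo 0 b, (u (γ θ)) ^ 2 ≤ ∫ _ in Ioo 0 b, B ^ 2 := by
      apply setIntegral_mono_on hu2int
        (integrableOn_const (by simp [Real.volume_Ioo])) measurableSet_Ioo
      intro θ hθ
      have h := hB θ ⟨hθ.1.le, hθ.2.le⟩
      have := abs_le.mp h
      nlinarith [this.1, this.2]
    have hconst : ∫ _ in Ioo 0 b, B ^ 2 = b * B ^ 2 := by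
      rw [setIntegral_const]
      simp [Real.volume_Ioo, ENNReal.toReal_ofReal hb.le, hb.le]
    linarith [hmono, hconst.le, hconst.ge]
  have hmIoo : IntegrableOn m (Ioo 0 b) := (hmc'.integrableOn_Icc).mono_set Ioo_subset_Icc_self
  have hm2Ioo : IntegrableOn (fun t => m t ^ 2) (Ioo 0 b) :=
    ((hmc'.pow 2).integrableOn_Icc).mono_set Ioo_subset_Icc_self
  have hBIoo : B = ∫ t in Ioo 0 b, m t := by
    rw [hBdef, intervalIntegral.integral_of_le hb.le, integral_Ioc_eq_integral_Ioo]
  have hcs : B ^ 2 ≤ b * ∫ t in Ioo 0 b, m t ^ 2 := by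
    rw [hBIoo]; exact cs1d hb hmIoo hm2Ioo
  have hint2 : ∫ t in Ioo 0 b, m t ^ 2
      = r ^ 2 * ∫ θ in Ioo 0 b, ‖gradient u (γ θ)‖ ^ 2 := by
    simp_rw [hmdef, mul_pow]
    exact MeasureTheory.integral_const_mul _ _
  have hJ0 : 0 ≤ ∫ θ in Ioo 0 b, ‖gradient u (γ θ)‖ ^ 2 :=
    setIntegral_nonneg measurableSet_Ioo (fun θ _ => sq_nonneg _)
  calc ∫ θ in Ioo 0 b, (u (γ θ)) ^ 2 ≤ b * B ^ 2 := hstep1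
    _ ≤ b * (b * (r ^ 2 * ∫ θ in Ioo 0 b, ‖gradient u (γ θ)‖ ^ 2)) := by
        apply mul_le_mul_of_nonneg_left _ hb.le
        rw [← hint2]; exact hcs
    _ = b ^ 2 * r ^ 2 * ∫ θ in Ioo 0 b, ‖gradient u (γ θ)‖ ^ 2 := by ring

/-! ### Change of variables -/

def sectorMap (x : EuclideanSpace ℝ (Fin 2)) : EuclideanSpace ℝ (Fin 2) :=
  vec2 (x 0 * Real.cos (x 1)) (x 0 * Real.sin (x 1))

abbrev eE : EuclideanSpace ℝ (Fin 2) ≃L[ℝ] (Fin 2 → ℝ) :=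
  PiLp.continuousLinearEquiv 2 ℝ (fun _ : Fin 2 => ℝ)

def sectorD0 (x : EuclideanSpace ℝ (Fin 2)) : (Fin 2 → ℝ) →L[ℝ] (Fin 2 → ℝ) :=
  ContinuousLinearMap.pi ![
    (x 0) • ((-Real.sin (x 1)) • ContinuousLinearMap.proj 1) +
      Real.cos (x 1) • ContinuousLinearMap.proj 0,
    (x 0) • ((Real.cos (x 1)) • ContinuousLinearMap.proj 1) +
      Real.sin (x 1) • ContinuousLinearMap.proj 0]

def sectorD (x : EuclideanSpace ℝ (Fin 2)) :
    EuclideanSpace ℝ (Fin 2) →L[ℝ] EuclideanSpace ℝ (Fin 2) :=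
  (eE.symm.toContinuousLinearMap.comp (sectorD0 x)).comp eE.toContinuousLinearMap

lemma hasFDerivAt_sectorMap (x : EuclideanSpace ℝ (Fin 2)) :
    HasFDerivAt sectorMap (sectorD x) x := by
  have h0 : HasFDerivAt
      (fun y : Fin 2 → ℝ => (![y 0 * Real.cos (y 1), y 0 * Real.sin (y 1)] : Fin 2 → ℝ))
      (sectorD0 x) (eE x) := by
    apply hasFDerivAt_pi''
    intro i
    fin_cases i
    · simp only [sectorD0, ContinuousLinearMap.proj_pi, Matrix.cons_val_zero]
      have hc := (ContinuousLinearMap.proj (R := ℝ) (φ := fun _ : Fin 2 => ℝ) 0).hasFDerivAt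
        (x := eE x)
      have hd := (Real.hasDerivAt_cos (x 1)).comp_hasFDerivAt (eE x)
        ((ContinuousLinearMap.proj (R := ℝ) (φ := fun _ : Fin 2 => ℝ) 1).hasFDerivAt (x := eE x))
      exact hc.mul hd
    · simp only [sectorD0, ContinuousLinearMap.proj_pi, Matrix.cons_val_one, Matrix.head_cons]
      have hc := (ContinuousLinearMap.proj (R := ℝ) (φ := fun _ : Fin 2 => ℝ) 0).hasFDerivAt
        (x := eE x)
      have hd := (Real.hasDerivAt_sin (x 1)).comp_hasFDerivAt (eE x)
        ((ContinuousLinearMap.proj (R := ℝ) (φ := fun _ : Fin 2 => ℝ) 1).hasFDerivAt (x := eE x))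
      exact hc.mul hd
  have h1 := (eE.symm.toContinuousLinearMap.hasFDerivAt (x := (fun y : Fin 2 → ℝ =>
      (![y 0 * Real.cos (y 1), y 0 * Real.sin (y 1)] : Fin 2 → ℝ)) (eE x))).comp (eE x) h0
  have h2 := h1.comp x eE.toContinuousLinearMap.hasFDerivAt
  exact h2

lemma det_sectorD0 (x : EuclideanSpace ℝ (Fin 2)) :
    LinearMap.det ((sectorD0 x : (Fin 2 → ℝ) →L[ℝ] (Fin 2 → ℝ)) :
      (Fin 2 → ℝ) →ₗ[ℝ] (Fin 2 → ℝ)) = x 0 := by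
  rw [← LinearMap.det_toMatrix' ]
  rw [Matrix.det_fin_two]
  simp only [LinearMap.toMatrix'_apply, ContinuousLinearMap.coe_coe, sectorD0,
    ContinuousLinearMap.pi_apply, ContinuousLinearMap.add_apply, ContinuousLinearMap.smul_apply,
    ContinuousLinearMap.proj_apply, Matrix.cons_val_zero, Matrix.cons_val_one, Matrix.head_cons,
    smul_eq_mul]
  norm_num
  linear_combination x 0 * Real.sin_sq_add_cos_sq (x 1)

lemma det_sectorD (x : EuclideanSpace ℝ (Fin 2)) : (sectorD x).det = x 0 := by
  have h : (sectorD x).toLinearMap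
      = ((eE.symm.toLinearEquiv : (Fin 2 → ℝ) ≃ₗ[ℝ] EuclideanSpace ℝ (Fin 2)) :
          (Fin 2 → ℝ) →ₗ[ℝ] EuclideanSpace ℝ (Fin 2)) ∘ₗ
        ((sectorD0 x).toLinearMap ∘ₗ
          ((eE.symm.toLinearEquiv.symm :
            EuclideanSpace ℝ (Fin 2) ≃ₗ[ℝ] (Fin 2 → ℝ)) :
            EuclideanSpace ℝ (Fin 2) →ₗ[ℝ] (Fin 2 → ℝ))) := rfl
  exact (congrArg LinearMap.det h).trans
    ((LinearMap.det_conj _ eE.symm.toLinearEquiv).trans (det_sectorD0 x))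

def sectorSet (a α : ℝ) : Set (EuclideanSpace ℝ (Fin 2)) :=
  (fun x : EuclideanSpace ℝ (Fin 2) => x 0) ⁻¹' (Ioo 0 a) ∩
    (fun x : EuclideanSpace ℝ (Fin 2) => x 1) ⁻¹' (Ioo 0 α)

lemma continuous_coord (i : Fin 2) : Continuous (fun x : EuclideanSpace ℝ (Fin 2) => x i) :=
  (continuous_apply i).comp eE.continuous

lemma measurableSet_sectorSet (a α : ℝ) : MeasurableSet (sectorSet a α) :=
  (((continuous_coord 0).measurable measurableSet_Ioo).inter
    ((continuous_coord 1).measurable measurableSet_Ioo))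

lemma image_sectorMap (a α : ℝ) : sectorMap '' sectorSet a α = planeSector a α := by
  ext x
  constructor
  · rintro ⟨y, ⟨hy1, hy2⟩, rfl⟩
    exact ⟨y 0, y 1, hy1.1, hy1.2, hy2.1, hy2.2, rfl⟩
  · rintro ⟨r, θ, hr, hra, hθ, hθα, hx⟩
    exact ⟨vec2 r θ, ⟨⟨hr, hra⟩, ⟨hθ, hθα⟩⟩, (congrArg (WithLp.toLp 2) hx).symm⟩

lemma injOn_sectorMap {a α : ℝ} (hα' : α ≤ 2 * Real.pi) :
    InjOn sectorMap (sectorSet a α) := by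
  rintro x ⟨⟨hx0, hxa⟩, ⟨hx1, hxα⟩⟩ y ⟨⟨hy0, hya⟩, ⟨hy1, hyα⟩⟩ h
  have h0 : x 0 * Real.cos (x 1) = y 0 * Real.cos (y 1) :=
    congrArg (fun z : EuclideanSpace ℝ (Fin 2) => z 0) h
  have h1 : x 0 * Real.sin (x 1) = y 0 * Real.sin (y 1) :=
    congrArg (fun z : EuclideanSpace ℝ (Fin 2) => z 1) h
  simp only [mem_preimage, mem_Ioo] at hx0 hxa hx1 hxα hy0 hya hy1 hyα
  have e1 := Real.sin_sq_add_cos_sq (x 1)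
  have e2 := Real.sin_sq_add_cos_sq (y 1)
  have hsq : x 0 ^ 2 = y 0 ^ 2 := by
    linear_combination (x 0 * Real.cos (x 1) + y 0 * Real.cos (y 1)) * h0 +
      (x 0 * Real.sin (x 1) + y 0 * Real.sin (y 1)) * h1 - x 0 ^ 2 * e1 + y 0 ^ 2 * e2
  have hr : x 0 = y 0 := le_antisymm (by nlinarith) (by nlinarith)
  have hcos : Real.cos (x 1) = Real.cos (y 1) := by
    rw [hr] at h0; exact mul_left_cancel₀ hy0.ne' h0
  have hsin : Real.sin (x 1) = Real.sin (y 1) := by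
    rw [hr] at h1; exact mul_left_cancel₀ hy0.ne' h1
  have hone : Real.cos (x 1 - y 1) = 1 := by
    rw [Real.cos_sub, hcos, hsin]
    linear_combination e2
  have hθ : x 1 = y 1 := by
    have := (Real.cos_eq_one_iff_of_lt_of_lt (by linarith) (by linarith)).1 hone
    linarith
  ext i
  fin_cases i
  · exact hr
  · exact hθ

lemma lintegral_planeSector {a α : ℝ} (hα' : α ≤ 2 * Real.pi)
    (g : EuclideanSpace ℝ (Fin 2) → ℝ≥0∞) :
    ∫⁻ x in planeSector a α, g x
      = ∫⁻ x in sectorSet a α, ENNReal.ofReal (x 0) * g (sectorMap x) := by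
  rw [← image_sectorMap a α,
    lintegral_image_eq_lintegral_abs_det_fderiv_mul volume (measurableSet_sectorSet a α)
      (fun x _ => (hasFDerivAt_sectorMap x).hasFDerivWithinAt) (injOn_sectorMap hα') g]
  apply setLIntegral_congr_fun (measurableSet_sectorSet a α)
  intro x hx
  beta_reduce
  rw [det_sectorD, abs_of_pos hx.1.1]

/-! ### Transfer to `ℝ × ℝ` and Fubini -/

def chiE : EuclideanSpace ℝ (Fin 2) ≃ᵐ ℝ × ℝ :=
  (MeasurableEquiv.toLp 2 (Fin 2 → ℝ)).symm.trans MeasurableEquiv.finTwoArrow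

lemma chiE_measurePreserving : MeasurePreserving chiE volume volume :=
  (volume_preserving_finTwoArrow ℝ).comp
    (EuclideanSpace.volume_preserving_symm_measurableEquiv_toLp (Fin 2))

lemma chiE_image_sectorSet (a α : ℝ) : chiE '' sectorSet a α = Ioo 0 a ×ˢ Ioo 0 α := by
  have h : chiE '' sectorSet a α = ⇑chiE.symm ⁻¹' sectorSet a α :=
    Equiv.image_eq_preimage_symm chiE.toEquiv (sectorSet a α)
  rw [h]
  ext p
  constructor
  · rintro ⟨⟨h1, h2⟩, ⟨h3, h4⟩⟩
    exact ⟨⟨h1, h2⟩, ⟨h3, h4⟩⟩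
  · rintro ⟨⟨h1, h2⟩, ⟨h3, h4⟩⟩
    exact ⟨⟨h1, h2⟩, ⟨h3, h4⟩⟩

lemma lintegral_sectorSet_eq (a α : ℝ) (H : ℝ × ℝ → ℝ≥0∞) :
    ∫⁻ x in sectorSet a α, H (x 0, x 1) = ∫⁻ p in Ioo 0 a ×ˢ Ioo 0 α, H p := by
  have h := chiE_measurePreserving.setLIntegral_comp_emb
    chiE.measurableEmbedding H (sectorSet a α)
  rw [chiE_image_sectorSet] at h
  exact h

lemma lintegral_rect {a α : ℝ} (H : ℝ × ℝ → ℝ≥0∞)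
    (hH : AEMeasurable H ((volume : Measure (ℝ × ℝ)).restrict (Ioo 0 a ×ˢ Ioo 0 α))) :
    ∫⁻ p in Ioo 0 a ×ˢ Ioo 0 α, H p = ∫⁻ r in Ioo 0 a, ∫⁻ θ in Ioo 0 α, H (r, θ) := by
  have h1 : (volume : Measure (ℝ × ℝ)).restrict (Ioo 0 a ×ˢ Ioo 0 α)
      = (volume.restrict (Ioo 0 a)).prod (volume.restrict (Ioo 0 α)) := by
    rw [Measure.prod_restrict, ← Measure.volume_eq_prod]
  rw [show (∫⁻ p in Ioo 0 a ×ˢ Ioo 0 α, H p)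
      = ∫⁻ p, H p ∂((volume : Measure (ℝ × ℝ)).restrict (Ioo 0 a ×ˢ Ioo 0 α)) from rfl, h1]
  rw [h1] at hH
  exact lintegral_prod H hH

lemma arc_mem_closure {a α : ℝ} (hα : 0 < α) {r θ : ℝ} (hr : 0 < r) (hra : r < a)
    (hθ : θ ∈ Icc 0 α) :
    vec2 (r * Real.cos θ) (r * Real.sin θ) ∈ closure (planeSector a α) := by
  have hf : Continuous (fun t : ℝ => vec2 (r * Real.cos t) (r * Real.sin t)) :=
    continuous_vec2 (by continuity) (by continuity)
  have hm : MapsTo (fun t : ℝ => vec2 (r * Real.cos t) (r * Real.sin t))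
      (Ioo 0 α) (planeSector a α) := fun t ht => ⟨r, t, hr, hra, ht.1, ht.2, rfl⟩
  have hc : θ ∈ closure (Ioo 0 α) := by rw [closure_Ioo hα.ne]; exact hθ
  exact map_mem_closure (f := fun t : ℝ => vec2 (r * Real.cos t) (r * Real.sin t)) hf hc hm

end HardyAux

/-- Hardy–Poincaré inequality on a plane sector for functions vanishing on the two
straight edges, with constant depending only on the opening angle `α`. -/
theorem hardy_poincare_sector (α : ℝ) (hα : 0 < α) (hα' : α < 2 * Real.pi) :
    ∃ C : ℝ, 0 < C ∧ ∀ a : ℝ, 0 < a → ∀ u : EuclideanSpace ℝ (Fin 2) → ℝ,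
      (∃ U : Set (EuclideanSpace ℝ (Fin 2)), IsOpen U ∧ closure (planeSector a α) ⊆ U ∧
        ContDiffOn ℝ 1 u U) →
      (∀ r ∈ Icc (0 : ℝ) a, u !₂[r, 0] = 0 ∧ u !₂[r * Real.cos α, r * Real.sin α] = 0) →
      (∫⁻ x in planeSector a α, ENNReal.ofReal (u x ^ 2 / ‖x‖ ^ 2)) ≤
        ENNReal.ofReal C * ∫⁻ x in planeSector a α, ENNReal.ofReal (‖gradient u x‖ ^ 2) := by
  refine ⟨α ^ 2, by positivity, ?_⟩
  rintro a ha u ⟨U, hUo, hUcl, hcd⟩ hedge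
  have hα2 : α ≤ 2 * Real.pi := hα'.le
  have hFc : Continuous (fun p : ℝ × ℝ => vec2 (p.1 * Real.cos p.2) (p.1 * Real.sin p.2)) :=
    continuous_vec2 (continuous_fst.mul (Real.continuous_cos.comp continuous_snd))
      (continuous_fst.mul (Real.continuous_sin.comp continuous_snd))
  have hrect : MeasurableSet (Ioo (0:ℝ) a ×ˢ Ioo (0:ℝ) α) :=
    measurableSet_Ioo.prod measurableSet_Ioo
  have hUsub : planeSector a α ⊆ U := fun x hx => hUcl (subset_closure hx)
  have hmapsTo : MapsTo (fun p : ℝ × ℝ => vec2 (p.1 * Real.cos p.2) (p.1 * Real.sin p.2))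
      (Ioo 0 a ×ˢ Ioo 0 α) U := fun p hp =>
    hUsub ⟨p.1, p.2, hp.1.1, hp.1.2, hp.2.1, hp.2.2, rfl⟩
  have huF : ContinuousOn (fun p : ℝ × ℝ => u (vec2 (p.1 * Real.cos p.2) (p.1 * Real.sin p.2)))
      (Ioo 0 a ×ˢ Ioo 0 α) := hcd.continuousOn.comp hFc.continuousOn hmapsTo
  have hgF : ContinuousOn
      (fun p : ℝ × ℝ => ‖gradient u (vec2 (p.1 * Real.cos p.2) (p.1 * Real.sin p.2))‖)
      (Ioo 0 a ×ˢ Ioo 0 α) :=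
    ((gradient_continuousOn hUo hcd).comp hFc.continuousOn hmapsTo).norm
  set G1 : ℝ × ℝ → ℝ≥0∞ := fun p =>
    ENNReal.ofReal (p.1 * (u (vec2 (p.1 * Real.cos p.2) (p.1 * Real.sin p.2)) ^ 2 / p.1 ^ 2))
    with hG1def
  set G2 : ℝ × ℝ → ℝ≥0∞ := fun p =>
    ENNReal.ofReal (p.1 * ‖gradient u (vec2 (p.1 * Real.cos p.2) (p.1 * Real.sin p.2))‖ ^ 2)
    with hG2def
  have hG1m : AEMeasurable G1 ((volume : Measure (ℝ × ℝ)).restrict (Ioo 0 a ×ˢ Ioo 0 α)) := by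
    have hcont : ContinuousOn (fun p : ℝ × ℝ =>
        p.1 * (u (vec2 (p.1 * Real.cos p.2) (p.1 * Real.sin p.2)) ^ 2 / p.1 ^ 2))
        (Ioo 0 a ×ˢ Ioo 0 α) :=
      continuous_fst.continuousOn.mul ((huF.pow 2).div (continuous_fst.continuousOn.pow 2)
        (fun p hp => pow_ne_zero _ hp.1.1.ne'))
    exact (hcont.aemeasurable hrect).ennreal_ofReal
  have hG2m : AEMeasurable G2 ((volume : Measure (ℝ × ℝ)).restrict (Ioo 0 a ×ˢ Ioo 0 α)) := by
    have hcont : ContinuousOn (fun p : ℝ × ℝ =>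
        p.1 * ‖gradient u (vec2 (p.1 * Real.cos p.2) (p.1 * Real.sin p.2))‖ ^ 2)
        (Ioo 0 a ×ˢ Ioo 0 α) := continuous_fst.continuousOn.mul (hgF.pow 2)
    exact (hcont.aemeasurable hrect).ennreal_ofReal
  have hLHS : (∫⁻ x in planeSector a α, ENNReal.ofReal (u x ^ 2 / ‖x‖ ^ 2))
      = ∫⁻ r in Ioo 0 a, ∫⁻ θ in Ioo 0 α, G1 (r, θ) := by
    rw [lintegral_planeSector hα2]
    have hstep : ∫⁻ x in sectorSet a α,
        ENNReal.ofReal (x 0) * ENNReal.ofReal (u (sectorMap x) ^ 2 / ‖sectorMap x‖ ^ 2)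
        = ∫⁻ x in sectorSet a α, G1 (x 0, x 1) := by
      apply setLIntegral_congr_fun (measurableSet_sectorSet a α)
      intro x hx
      have hx0 : 0 < x 0 := hx.1.1
      have hnorm : ‖sectorMap x‖ = x 0 := norm_arc (x 0) (x 1) hx0.le
      rw [hG1def]
      simp only
      rw [show vec2 ((x 0, x 1).1 * Real.cos (x 0, x 1).2) ((x 0, x 1).1 * Real.sin (x 0, x 1).2)
        = sectorMap x from rfl, hnorm, ← ENNReal.ofReal_mul hx0.le]
    rw [hstep, lintegral_sectorSet_eq a α G1, lintegral_rect G1 hG1m]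
  have hRHS : (∫⁻ x in planeSector a α, ENNReal.ofReal (‖gradient u x‖ ^ 2))
      = ∫⁻ r in Ioo 0 a, ∫⁻ θ in Ioo 0 α, G2 (r, θ) := by
    rw [lintegral_planeSector hα2]
    have hstep : ∫⁻ x in sectorSet a α,
        ENNReal.ofReal (x 0) * ENNReal.ofReal (‖gradient u (sectorMap x)‖ ^ 2)
        = ∫⁻ x in sectorSet a α, G2 (x 0, x 1) := by
      apply setLIntegral_congr_fun (measurableSet_sectorSet a α)
      intro x hx
      have hx0 : 0 < x 0 := hx.1.1
      rw [hG2def]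
      simp only
      rw [show vec2 ((x 0, x 1).1 * Real.cos (x 0, x 1).2) ((x 0, x 1).1 * Real.sin (x 0, x 1).2)
        = sectorMap x from rfl, ← ENNReal.ofReal_mul hx0.le]
    rw [hstep, lintegral_sectorSet_eq a α G2, lintegral_rect G2 hG2m]
  rw [hLHS, hRHS, ← lintegral_const_mul' (ENNReal.ofReal (α ^ 2)) _ ENNReal.ofReal_ne_top]
  apply lintegral_mono_ae
  rw [ae_restrict_iff' measurableSet_Ioo]
  filter_upwards with r hr
  -- now the inner, one-dimensional estimate for fixed r
  have hγc : Continuous (fun θ : ℝ => vec2 (r * Real.cos θ) (r * Real.sin θ)) :=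
    continuous_vec2 (by continuity) (by continuity)
  have harc : ∀ θ ∈ Icc (0:ℝ) α, vec2 (r * Real.cos θ) (r * Real.sin θ) ∈ U :=
    fun θ hθ => hUcl (arc_mem_closure hα hr.1 hr.2 hθ)
  have huγ : ContinuousOn (fun θ => u (vec2 (r * Real.cos θ) (r * Real.sin θ))) (Icc 0 α) :=
    hcd.continuousOn.comp hγc.continuousOn harc
  have hgγ : ContinuousOn (fun θ => ‖gradient u (vec2 (r * Real.cos θ) (r * Real.sin θ))‖)
      (Icc 0 α) := ((gradient_continuousOn hUo hcd).comp hγc.continuousOn harc).norm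
  have hIu : IntegrableOn (fun θ => u (vec2 (r * Real.cos θ) (r * Real.sin θ)) ^ 2 / r)
      (Ioo 0 α) := (((huγ.pow 2).div_const r).integrableOn_Icc).mono_set Ioo_subset_Icc_self
  have hIg : IntegrableOn
      (fun θ => r * ‖gradient u (vec2 (r * Real.cos θ) (r * Real.sin θ))‖ ^ 2) (Ioo 0 α) :=
    ((continuousOn_const.mul (hgγ.pow 2)).integrableOn_Icc).mono_set Ioo_subset_Icc_self
  have h0' : u (vec2 (r * Real.cos 0) (r * Real.sin 0)) = 0 := by
    have h := (hedge r ⟨hr.1.le, hr.2.le⟩).1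
    have hveq : vec2 (r * Real.cos 0) (r * Real.sin 0) = vec2 r 0 := by
      rw [Real.cos_zero, Real.sin_zero, mul_one, mul_zero]
    rw [hveq]; exact h
  have hL1 : ∫⁻ θ in Ioo 0 α, G1 (r, θ)
      = ∫⁻ θ in Ioo 0 α,
          ENNReal.ofReal (u (vec2 (r * Real.cos θ) (r * Real.sin θ)) ^ 2 / r) := by
    apply setLIntegral_congr_fun measurableSet_Ioo
    intro θ hθ
    rw [hG1def]
    simp only
    congr 1
    have hrne : r ≠ 0 := hr.1.ne'
    field_simp
  have hL2 : ∫⁻ θ in Ioo 0 α, G2 (r, θ)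
      = ∫⁻ θ in Ioo 0 α,
          ENNReal.ofReal (r * ‖gradient u (vec2 (r * Real.cos θ) (r * Real.sin θ))‖ ^ 2) := by
    apply setLIntegral_congr_fun measurableSet_Ioo
    intro θ hθ
    rw [hG2def]
  rw [hL1, hL2,
    ← ofReal_integral_eq_lintegral_ofReal hIu
      (ae_of_all _ fun θ => div_nonneg (sq_nonneg _) hr.1.le),
    ← ofReal_integral_eq_lintegral_ofReal hIg
      (ae_of_all _ fun θ => mul_nonneg hr.1.le (sq_nonneg _)),
    ← ENNReal.ofReal_mul (by positivity : (0:ℝ) ≤ α ^ 2)]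
  apply ENNReal.ofReal_le_ofReal
  rw [integral_div, MeasureTheory.integral_const_mul, div_le_iff₀ hr.1]
  have hk := key1d hα hr.1 hUo hcd harc h0'
  have hJ0 : 0 ≤ ∫ θ in Ioo 0 α, ‖gradient u (vec2 (r * Real.cos θ) (r * Real.sin θ))‖ ^ 2 :=
    setIntegral_nonneg measurableSet_Ioo (fun θ _ => sq_nonneg _)
  nlinarith [hk, hJ0]
end

section
/- Let a > 0, L > 0 and 0 < α < 2π, let W = {(r cos θ, r sin θ) : 0 < r < a, 0 < θ < α} ⊂ ℝ², and let 𝒞 = W × (0, L) ⊂ ℝ³ be the corresponding wedge-shaped cylinder. There exists a constant C > 0, depending only on α, such that for every function u : ℝ³ → ℝ that is continuously differentiable on an open neighborhood of the closure of 𝒞 and vanishes on the face {(r, 0, z) : 0 ≤ r ≤ a, 0 ≤ z ≤ L}, one has ∫_𝒞 u(x₁,x₂,x₃)²/(x₁² + x₂²) dx ≤ C ∫_𝒞 ‖∇u(x)‖² dx (an inequality in the extended nonnegative reals). -/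
open MeasureTheory Set Real

/-- The wedge-shaped cylinder `𝒞 = W × (0, L) ⊂ ℝ³` over the plane sector `W` of radius `a`
and opening angle `α`, with edge on the `x₃`-axis. -/
def wedgeCylinder (a α L : ℝ) : Set (EuclideanSpace ℝ (Fin 3)) :=
  {x | ∃ r θ z : ℝ, 0 < r ∧ r < a ∧ 0 < θ ∧ θ < α ∧ 0 < z ∧ z < L ∧
    x = ![r * Real.cos θ, r * Real.sin θ, z]}

noncomputable section HardyAux

abbrev E3' := EuclideanSpace ℝ (Fin 3)

/-- The cylindrical-coordinates map. -/
def wedgePhi (p : E3') : E3' := WithLp.toLp 2 ![p 0 * Real.cos (p 1), p 0 * Real.sin (p 1), p 2]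

def wedgePhiMat (p : E3') : Matrix (Fin 3) (Fin 3) ℝ :=
  !![Real.cos (p 1), -(p 0 * Real.sin (p 1)), 0;
     Real.sin (p 1), p 0 * Real.cos (p 1), 0;
     0, 0, 1]

def wedgePhiDeriv (p : E3') : E3' →L[ℝ] E3' :=
  LinearMap.toContinuousLinearMap (Matrix.toEuclideanLin (wedgePhiMat p))

lemma wedgePhiDeriv_det (p : E3') : (wedgePhiDeriv p).det = p 0 := by
  rw [wedgePhiDeriv, ContinuousLinearMap.det, LinearMap.coe_toContinuousLinearMap]
  rw [Matrix.toEuclideanLin_eq_toLin, LinearMap.det_toLin]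
  rw [wedgePhiMat, Matrix.det_fin_three]
  simp [Matrix.cons_val_zero, Matrix.cons_val_one]
  have := Real.sin_sq_add_cos_sq (p 1)
  linear_combination p 0 * this

open ContinuousLinearMap in
lemma hasFDerivAt_wedgePhi (p : E3') : HasFDerivAt wedgePhi (wedgePhiDeriv p) p := by
  set e := PiLp.continuousLinearEquiv 2 ℝ (fun _ : Fin 3 => ℝ)
  set B : (Fin 3 → ℝ) →L[ℝ] (Fin 3 → ℝ) :=
    LinearMap.toContinuousLinearMap (Matrix.mulVecLin (wedgePhiMat p)) with hB
  have hF : HasFDerivAt (fun q : Fin 3 → ℝ => ![q 0 * Real.cos (q 1), q 0 * Real.sin (q 1), q 2])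
      B (e p) := by
    apply hasFDerivAt_pi''
    intro i
    fin_cases i
    · have h := (hasFDerivAt_apply (𝕜 := ℝ) 0 (e p)).mul
        ((Real.hasDerivAt_cos ((e p) 1)).comp_hasFDerivAt (e p)
          (hasFDerivAt_apply (𝕜 := ℝ) 1 (e p)))
      refine h.congr_fderiv ?_
      ext v
      simp [hB, wedgePhiMat, Matrix.mulVec, dotProduct, Fin.sum_univ_three, e]
      ring
    · have h := (hasFDerivAt_apply (𝕜 := ℝ) 0 (e p)).mul
        ((Real.hasDerivAt_sin ((e p) 1)).comp_hasFDerivAt (e p)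
          (hasFDerivAt_apply (𝕜 := ℝ) 1 (e p)))
      refine h.congr_fderiv ?_
      ext v
      simp [hB, wedgePhiMat, Matrix.mulVec, dotProduct, Fin.sum_univ_three, e]
      ring
    · have h := hasFDerivAt_apply (𝕜 := ℝ) 2 (e p)
      refine h.congr_fderiv ?_
      ext v
      simp [hB, wedgePhiMat, Matrix.mulVec, dotProduct, Fin.sum_univ_three, e]
  have hcomp := ((e.symm.toContinuousLinearMap).hasFDerivAt).comp p
    (hF.comp p ((e.toContinuousLinearMap).hasFDerivAt))
  exact hcomp


lemma wedgePhi_continuous : Continuous wedgePhi :=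
  continuous_iff_continuousAt.mpr fun p => (hasFDerivAt_wedgePhi p).continuousAt

def wedgeBox (a α L : ℝ) : Set E3' :=
  {p | p 0 ∈ Ioo 0 a ∧ p 1 ∈ Ioo 0 α ∧ p 2 ∈ Ioo 0 L}

lemma wedgeBox_measurable (a α L : ℝ) : MeasurableSet (wedgeBox a α L) := by
  have h : ∀ i : Fin 3, Measurable (fun p : E3' => p i) := fun i =>
    (EuclideanSpace.proj (𝕜 := ℝ) i).continuous.measurable
  exact (((h 0).comp measurable_id) measurableSet_Ioo).inter
    ((((h 1).comp measurable_id) measurableSet_Ioo).inter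
      (((h 2).comp measurable_id) measurableSet_Ioo))

lemma wedge_eq_image (a α L : ℝ) : wedgeCylinder a α L = wedgePhi '' wedgeBox a α L := by
  ext x
  constructor
  · rintro ⟨r, θ, z, hr, hra, hθ, hθα, hz, hzL, hx⟩
    refine ⟨WithLp.toLp 2 ![r, θ, z], ⟨⟨hr, hra⟩, ⟨hθ, hθα⟩, ⟨hz, hzL⟩⟩, ?_⟩
    apply WithLp.ofLp_injective 2
    rw [hx]
    simp [wedgePhi]
  · rintro ⟨p, ⟨⟨h0, h0'⟩, ⟨h1, h1'⟩, ⟨h2, h2'⟩⟩, rfl⟩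
    exact ⟨p 0, p 1, p 2, h0, h0', h1, h1', h2, h2', rfl⟩

lemma injOn_wedgePhi {a α L : ℝ} (hα : α ≤ 2 * Real.pi) : InjOn wedgePhi (wedgeBox a α L) := by
  rintro p ⟨⟨hp0, _⟩, ⟨hp1, hp1'⟩, _⟩ q ⟨⟨hq0, _⟩, ⟨hq1, hq1'⟩, _⟩ h
  have h0 : p 0 * Real.cos (p 1) = q 0 * Real.cos (q 1) := congrFun (congrArg WithLp.ofLp h) 0
  have h1 : p 0 * Real.sin (p 1) = q 0 * Real.sin (q 1) := congrFun (congrArg WithLp.ofLp h) 1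
  have h2 : p 2 = q 2 := congrFun (congrArg WithLp.ofLp h) 2
  have hr : p 0 = q 0 := by
    have hsq : (p 0)^2 = (q 0)^2 := by
      have e1 := Real.sin_sq_add_cos_sq (p 1)
      have e2 := Real.sin_sq_add_cos_sq (q 1)
      linear_combination (p 0 * Real.sin (p 1) + q 0 * Real.sin (q 1)) * h1
        + (p 0 * Real.cos (p 1) + q 0 * Real.cos (q 1)) * h0
        - (p 0)^2 * e1 + (q 0)^2 * e2
    nlinarith [hp0, hq0]
  have hcos : Real.cos (p 1) = Real.cos (q 1) := by
    have := h0; rw [hr] at this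
    exact mul_left_cancel₀ (ne_of_gt (hr ▸ hp0)) this
  have hsin : Real.sin (p 1) = Real.sin (q 1) := by
    have := h1; rw [hr] at this
    exact mul_left_cancel₀ (ne_of_gt (hr ▸ hp0)) this
  have hθ : p 1 = q 1 := by
    have hexp : Complex.exp (p 1 * Complex.I) = Complex.exp (q 1 * Complex.I) := by
      rw [Complex.exp_mul_I, Complex.exp_mul_I]
      rw [← Complex.ofReal_cos, ← Complex.ofReal_sin,
        ← Complex.ofReal_cos, ← Complex.ofReal_sin, hcos, hsin]
    obtain ⟨n, hn⟩ := Complex.exp_eq_exp_iff_exists_int.mp hexp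
    have hreal : (p 1 : ℂ) = (q 1 : ℂ) + n * (2 * Real.pi) := by
      have hI : ((p 1 : ℂ) - (q 1 : ℂ) - n * (2 * Real.pi)) * Complex.I = 0 := by
        ring_nf
        ring_nf at hn
        linear_combination hn
      rcases mul_eq_zero.mp hI with h' | h'
      · linear_combination h'
      · exact absurd h' Complex.I_ne_zero
    have hreal' : p 1 = q 1 + n * (2 * Real.pi) := by
      exact_mod_cast hreal
    have hn0 : n = 0 := by
      have hpi := Real.pi_pos
      by_contra hne
      have h1' : (1 : ℝ) ≤ |(n : ℝ)| := by
        rw [← Int.cast_abs]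
        exact_mod_cast Int.one_le_abs (by exact_mod_cast hne)
      have : |p 1 - q 1| < 2 * Real.pi := by
        rw [abs_lt]; constructor <;> nlinarith
      rw [hreal'] at this
      have : |(n : ℝ)| * (2 * Real.pi) < 2 * Real.pi := by
        simpa [abs_mul, abs_of_pos (by positivity : (0:ℝ) < 2 * Real.pi)] using this
      nlinarith
    rw [hreal', hn0]; simp
  apply WithLp.ofLp_injective 2
  funext i
  fin_cases i
  · exact hr
  · exact hθ
  · exact h2

lemma wedgeOneD {A : ℝ} (hA : 0 < A) {g g' : ℝ → ℝ}
    (hg : ∀ θ ∈ Icc (0:ℝ) A, HasDerivAt g (g' θ) θ)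
    (hg' : ContinuousOn g' (Icc 0 A)) (hg0 : g 0 = 0) :
    ∫ θ in (0:ℝ)..A, (g θ)^2 ≤ 4*A^2 * ∫ θ in (0:ℝ)..A, (g' θ)^2 := by
  have hgc : ContinuousOn g (Icc 0 A) := fun θ hθ => ((hg θ hθ).continuousAt).continuousWithinAt
  set X := ∫ θ in (0:ℝ)..A, (g θ)^2 with hX
  set Y := ∫ θ in (0:ℝ)..A, (g' θ)^2 with hY
  have hint : IntervalIntegrable (fun σ => |2 * g σ * g' σ|) volume 0 A := by
    apply ContinuousOn.intervalIntegrable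
    rw [uIcc_of_le hA.le]
    exact ((continuousOn_const.mul hgc).mul hg').abs
  have hint2 : IntervalIntegrable (fun σ => (g σ)^2/(2*A) + 2*A*(g' σ)^2) volume 0 A := by
    apply ContinuousOn.intervalIntegrable
    rw [uIcc_of_le hA.le]
    exact ((hgc.pow 2).div_const _).add (continuousOn_const.mul (hg'.pow 2))
  have key : ∀ θ ∈ Icc (0:ℝ) A, (g θ)^2 ≤ (1/(2*A)) * X + 2*A*Y := by
    intro θ hθ
    have hsub : Icc (0:ℝ) θ ⊆ Icc 0 A := Icc_subset_Icc le_rfl hθ.2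
    have h1 : (g θ)^2 = ∫ σ in (0:ℝ)..θ, 2 * g σ * g' σ := by
      have := intervalIntegral.integral_eq_sub_of_hasDerivAt (f := fun σ => (g σ)^2)
        (f' := fun σ => 2 * g σ * g' σ) (a := 0) (b := θ) ?_ ?_
      · rw [this, hg0]; ring
      · intro σ hσ
        rw [uIcc_of_le hθ.1] at hσ
        have := (hg σ (hsub hσ)).pow 2
        exact this.congr_deriv (by simp)
      · apply ContinuousOn.intervalIntegrable
        rw [uIcc_of_le hθ.1]
        exact ((continuousOn_const.mul (hgc.mono hsub)).mul (hg'.mono hsub))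
    have h2 : (∫ σ in (0:ℝ)..θ, 2 * g σ * g' σ) ≤ ∫ σ in (0:ℝ)..θ, |2 * g σ * g' σ| := by
      apply intervalIntegral.integral_mono_on hθ.1
      · apply ContinuousOn.intervalIntegrable
        rw [uIcc_of_le hθ.1]
        exact ((continuousOn_const.mul (hgc.mono hsub)).mul (hg'.mono hsub))
      · exact hint.mono_set (by rw [uIcc_of_le hθ.1, uIcc_of_le hA.le]; exact hsub)
      · intro σ _; exact le_abs_self _
    have h3 : (∫ σ in (0:ℝ)..θ, |2 * g σ * g' σ|) ≤ ∫ σ in (0:ℝ)..A, |2 * g σ * g' σ| := by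
      apply intervalIntegral.integral_mono_interval le_rfl hθ.1 hθ.2
      · filter_upwards with σ using abs_nonneg _
      · exact hint
    have h4 : (∫ σ in (0:ℝ)..A, |2 * g σ * g' σ|) ≤
        ∫ σ in (0:ℝ)..A, ((g σ)^2/(2*A) + 2*A*(g' σ)^2) := by
      apply intervalIntegral.integral_mono_on hA.le hint hint2
      intro σ _
      have h := sq_nonneg (|g σ| - 2*A*|g' σ|)
      have h5 : |2 * g σ * g' σ| = 2 * |g σ| * |g' σ| := by
        rw [abs_mul, abs_mul]; simp
      have h2A : (0:ℝ) < 2 * A := by linarith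
      have key2 : ∀ x y : ℝ, 2 * x * y ≤ x ^ 2 / (2 * A) + 2 * A * y ^ 2 := by
        intro x y
        have e : x ^ 2 / (2 * A) + 2 * A * y ^ 2 - 2 * x * y
            = (x - 2 * A * y) ^ 2 / (2 * A) := by
          field_simp
          ring
        linarith [div_nonneg (sq_nonneg (x - 2 * A * y)) h2A.le]
      rw [h5, ← sq_abs (g σ), ← sq_abs (g' σ)]
      exact key2 _ _
    have h6 : (∫ σ in (0:ℝ)..A, ((g σ)^2/(2*A) + 2*A*(g' σ)^2)) = (1/(2*A)) * X + 2*A*Y := by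
      rw [intervalIntegral.integral_add, intervalIntegral.integral_div,
        intervalIntegral.integral_const_mul]
      · rw [hX, hY]; ring
      · apply ContinuousOn.intervalIntegrable
        rw [uIcc_of_le hA.le]; exact (hgc.pow 2).div_const _
      · apply ContinuousOn.intervalIntegrable
        rw [uIcc_of_le hA.le]; exact continuousOn_const.mul (hg'.pow 2)
    linarith
  have hXA : X ≤ A * ((1/(2*A)) * X + 2*A*Y) := by
    calc X ≤ ∫ _ in (0:ℝ)..A, ((1/(2*A)) * X + 2*A*Y) := by
            apply intervalIntegral.integral_mono_on hA.le
            · apply ContinuousOn.intervalIntegrable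
              rw [uIcc_of_le hA.le]; exact hgc.pow 2
            · exact intervalIntegrable_const
            · exact key
      _ = A * ((1/(2*A)) * X + 2*A*Y) := by
            rw [intervalIntegral.integral_const, sub_zero, smul_eq_mul]
  have e1 : A * ((1/(2*A)) * X + 2*A*Y) = (A * (1/(2*A))) * X + 2*A^2*Y := by ring
  have e2 : A * (1/(2*A)) = 1/2 := by
    field_simp
  rw [e1, e2] at hXA
  linarith

lemma wedgeSlice {α a L : ℝ} (hα : 0 < α) (ha : 0 < a) (hL : 0 < L)
    {u : E3' → ℝ} {U : Set E3'} (hU : IsOpen U) (hcl : closure (wedgeCylinder a α L) ⊆ U)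
    (hu : ContDiffOn ℝ 1 u U)
    (hbd : ∀ r ∈ Icc (0:ℝ) a, ∀ z ∈ Icc (0:ℝ) L, u (WithLp.toLp 2 ![r, 0, z]) = 0)
    {r z : ℝ} (hr : r ∈ Ioo 0 a) (hz : z ∈ Ioo 0 L) :
    ∫⁻ θ in Ioo 0 α, ENNReal.ofReal ((u (WithLp.toLp 2 ![r * Real.cos θ, r * Real.sin θ, z]))^2 / r)
      ≤ ENNReal.ofReal (4*α^2) *
        ∫⁻ θ in Ioo 0 α,
          ENNReal.ofReal (r * ‖fderiv ℝ u (WithLp.toLp 2 ![r * Real.cos θ, r * Real.sin θ, z])‖^2) := by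
  set c : ℝ → E3' := fun θ => WithLp.toLp 2 ![r * Real.cos θ, r * Real.sin θ, z] with hc_def
  set v : ℝ → E3' := fun θ => WithLp.toLp 2 ![-(r * Real.sin θ), r * Real.cos θ, 0] with hv_def
  set e := PiLp.continuousLinearEquiv 2 ℝ (fun _ : Fin 3 => ℝ)
  have hc_cont : Continuous c := by
    have : Continuous (fun θ : ℝ => (![r * Real.cos θ, r * Real.sin θ, z] : Fin 3 → ℝ)) := by
      apply continuous_pi
      intro i
      fin_cases i <;> simp <;> fun_prop
    exact (e.symm.continuous).comp this
  have hv_cont : Continuous v := by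
    have : Continuous (fun θ : ℝ => (![-(r * Real.sin θ), r * Real.cos θ, 0] : Fin 3 → ℝ)) := by
      apply continuous_pi
      intro i
      fin_cases i <;> simp <;> fun_prop
    exact (e.symm.continuous).comp this
  have himg : c '' (Ioo 0 α) ⊆ wedgeCylinder a α L := by
    rintro x ⟨θ, hθ, rfl⟩
    exact ⟨r, θ, z, hr.1, hr.2, hθ.1, hθ.2, hz.1, hz.2, rfl⟩
  have hmemU : ∀ θ ∈ Icc (0:ℝ) α, c θ ∈ U := by
    intro θ hθ
    apply hcl
    have hθcl : θ ∈ closure (Ioo (0:ℝ) α) := by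
      rw [closure_Ioo hα.ne]; exact hθ
    have := (hc_cont.continuousWithinAt (s := Ioo 0 α) (x := θ)).mem_closure_image hθcl
    exact closure_mono himg this
  have hc_deriv : ∀ θ : ℝ, HasDerivAt c (v θ) θ := by
    intro θ
    have hpi : HasDerivAt (fun t : ℝ => (![r * Real.cos t, r * Real.sin t, z] : Fin 3 → ℝ))
        (![-(r * Real.sin θ), r * Real.cos θ, 0] : Fin 3 → ℝ) θ := by
      rw [hasDerivAt_pi]
      intro i
      fin_cases i
      · simp only [Matrix.cons_val_zero]
        have := (Real.hasDerivAt_cos θ).const_mul r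
        exact this.congr_deriv (by simp)
      · have := (Real.hasDerivAt_sin θ).const_mul r
        exact this.congr_deriv (by simp)
      · have := hasDerivAt_const (𝕜 := ℝ) θ z
        convert this using 1 <;> norm_num
    exact (e.symm.toContinuousLinearMap.hasFDerivAt).comp_hasDerivAt θ hpi
  set g : ℝ → ℝ := fun θ => u (c θ) with hg_def
  set D : ℝ → ℝ := fun θ => fderiv ℝ u (c θ) (v θ) with hD_def
  have hg_deriv : ∀ θ ∈ Icc (0:ℝ) α, HasDerivAt g (D θ) θ := by
    intro θ hθ
    have hdiff : DifferentiableAt ℝ u (c θ) :=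
      (hu.differentiableOn one_ne_zero).differentiableAt (hU.mem_nhds (hmemU θ hθ))
    exact (hdiff.hasFDerivAt).comp_hasDerivAt θ (hc_deriv θ)
  have hfd_cont : ContinuousOn (fderiv ℝ u) U := hu.continuousOn_fderiv_of_isOpen hU le_rfl
  have hD_cont : ContinuousOn D (Icc 0 α) := by
    apply ContinuousOn.clm_apply
    · exact (hfd_cont.comp hc_cont.continuousOn hmemU)
    · exact hv_cont.continuousOn
  have hg0 : g 0 = 0 := by
    have hcz : c 0 = WithLp.toLp 2 ![r, 0, z] := by
      apply WithLp.ofLp_injective 2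
      funext i; fin_cases i <;> simp [hc_def]
    rw [hg_def]
    simp only
    rw [hcz]
    exact hbd r ⟨hr.1.le, hr.2.le⟩ z ⟨hz.1.le, hz.2.le⟩
  have hv_norm : ∀ θ : ℝ, ‖v θ‖ = r := by
    intro θ
    rw [EuclideanSpace.norm_eq]
    have : ∑ i : Fin 3, ‖(v θ) i‖^2 = r^2 := by
      rw [Fin.sum_univ_three]
      simp only [hv_def]
      rw [Real.norm_eq_abs, Real.norm_eq_abs, Real.norm_eq_abs]
      simp only [Matrix.cons_val_zero, Matrix.cons_val_one, Matrix.head_cons, sq_abs]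
      have := Real.sin_sq_add_cos_sq θ
      have h2 : (![-(r * Real.sin θ), r * Real.cos θ, 0] : Fin 3 → ℝ) 2 = 0 := rfl
      rw [h2]
      ring_nf
      nlinarith [this]
    rw [this]
    exact Real.sqrt_sq hr.1.le
  set N : ℝ → ℝ := fun θ => ‖fderiv ℝ u (c θ)‖ with hN_def
  have hD_bound : ∀ θ : ℝ, (D θ)^2 ≤ r^2 * (N θ)^2 := by
    intro θ
    have h1 : |D θ| ≤ N θ * r := by
      rw [hD_def]
      calc |fderiv ℝ u (c θ) (v θ)| ≤ ‖fderiv ℝ u (c θ)‖ * ‖v θ‖ :=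
            (fderiv ℝ u (c θ)).le_opNorm (v θ)
        _ = N θ * r := by rw [hv_norm θ]
    calc (D θ)^2 = |D θ|^2 := (sq_abs _).symm
      _ ≤ (N θ * r)^2 := by
          apply pow_le_pow_left₀ (abs_nonneg _) h1
      _ = r^2 * (N θ)^2 := by ring
  have hN_cont : ContinuousOn N (Icc 0 α) := by
    exact ((hfd_cont.comp hc_cont.continuousOn hmemU).norm)
  have hg_cont : ContinuousOn g (Icc 0 α) :=
    fun θ hθ => ((hg_deriv θ hθ).continuousAt).continuousWithinAt
  have h1D := wedgeOneD hα hg_deriv hD_cont hg0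
  have hint_g2 : IntegrableOn (fun θ => (g θ)^2) (Ioo 0 α) :=
    ((hg_cont.pow 2).integrableOn_Icc).mono_set Ioo_subset_Icc_self
  have hint_N2 : IntegrableOn (fun θ => r * (N θ)^2) (Ioo 0 α) :=
    ((continuousOn_const.mul (hN_cont.pow 2)).integrableOn_Icc).mono_set Ioo_subset_Icc_self
  have hint_D2 : IntegrableOn (fun θ => (D θ)^2) (Ioo 0 α) :=
    ((hD_cont.pow 2).integrableOn_Icc).mono_set Ioo_subset_Icc_self
  set X : ℝ := ∫ θ in (0:ℝ)..α, (g θ)^2 with hX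
  set Y : ℝ := ∫ θ in (0:ℝ)..α, (D θ)^2 with hY
  set Z : ℝ := ∫ θ in Ioo (0:ℝ) α, (N θ)^2 with hZ
  have hIoo_X : ∫ θ in Ioo (0:ℝ) α, (g θ)^2 = X := by
    rw [hX, intervalIntegral.integral_of_le hα.le, integral_Ioc_eq_integral_Ioo]
  have hIoo_Y : ∫ θ in Ioo (0:ℝ) α, (D θ)^2 = Y := by
    rw [hY, intervalIntegral.integral_of_le hα.le, integral_Ioc_eq_integral_Ioo]
  have hYZ : Y ≤ r^2 * Z := by
    rw [← hIoo_Y]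
    calc ∫ θ in Ioo (0:ℝ) α, (D θ)^2 ≤ ∫ θ in Ioo (0:ℝ) α, r^2 * (N θ)^2 := by
          apply setIntegral_mono_on hint_D2 _ measurableSet_Ioo
          · intro θ _; exact hD_bound θ
          · have : IntegrableOn (fun θ => r^2 * (N θ)^2) (Ioo 0 α) :=
              ((continuousOn_const.mul (hN_cont.pow 2)).integrableOn_Icc).mono_set
                Ioo_subset_Icc_self
            exact this
      _ = r^2 * Z := by rw [hZ, integral_const_mul]
  have hZps : 0 ≤ Z := by
    rw [hZ]
    apply setIntegral_nonneg measurableSet_Ioo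
    intro θ _; positivity
  have hfinal : X / r ≤ 4*α^2 * (r * Z) := by
    have h2 : X ≤ 4*α^2 * (r^2 * Z) := le_trans h1D (by nlinarith [hYZ, sq_nonneg α])
    rw [div_le_iff₀ hr.1]
    nlinarith [h2, hr.1]
  have hLHS : ∫⁻ θ in Ioo 0 α, ENNReal.ofReal ((u (c θ))^2 / r) = ENNReal.ofReal (X / r) := by
    rw [← MeasureTheory.ofReal_integral_eq_lintegral_ofReal]
    · rw [integral_div, hIoo_X]
    · exact hint_g2.div_const r
    · filter_upwards with θ
      exact div_nonneg (sq_nonneg _) hr.1.le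
  have hRHS : ∫⁻ θ in Ioo 0 α, ENNReal.ofReal (r * (N θ)^2) = ENNReal.ofReal (r * Z) := by
    rw [← MeasureTheory.ofReal_integral_eq_lintegral_ofReal hint_N2]
    · rw [integral_const_mul]
    · filter_upwards with θ
      exact mul_nonneg hr.1.le (sq_nonneg _)
  calc ∫⁻ θ in Ioo 0 α, ENNReal.ofReal ((u (WithLp.toLp 2 ![r * Real.cos θ, r * Real.sin θ, z]))^2 / r)
      = ENNReal.ofReal (X / r) := hLHS
    _ ≤ ENNReal.ofReal (4*α^2 * (r * Z)) := ENNReal.ofReal_le_ofReal hfinal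
    _ = ENNReal.ofReal (4*α^2) * ENNReal.ofReal (r * Z) := by
        rw [ENNReal.ofReal_mul (by positivity)]
    _ = ENNReal.ofReal (4*α^2) *
        ∫⁻ θ in Ioo 0 α,
          ENNReal.ofReal (r * ‖fderiv ℝ u (WithLp.toLp 2 ![r * Real.cos θ, r * Real.sin θ, z])‖^2) := by
        rw [hRHS]

def wedgeM3 : E3' ≃ᵐ ℝ × (Fin 2 → ℝ) :=
  (MeasurableEquiv.toLp 2 (Fin 3 → ℝ)).symm.trans
    (MeasurableEquiv.piFinSuccAbove (fun _ : Fin 3 => ℝ) 1)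

lemma wedgeM3_mp : MeasurePreserving wedgeM3 volume volume :=
  (volume_preserving_piFinSuccAbove (fun _ : Fin 3 => ℝ) 1).comp
    (EuclideanSpace.volume_preserving_symm_measurableEquiv_toLp (Fin 3))

def wedgeQ (a L : ℝ) : Set (Fin 2 → ℝ) := {q | 0 < q 0 ∧ q 0 < a ∧ 0 < q 1 ∧ q 1 < L}

lemma wedgeQ_measurable (a L : ℝ) : MeasurableSet (wedgeQ a L) := by
  have h0 : Measurable (fun q : Fin 2 → ℝ => q 0) := measurable_pi_apply 0
  have h1 : Measurable (fun q : Fin 2 → ℝ => q 1) := measurable_pi_apply 1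
  exact ((measurableSet_lt measurable_const h0).inter
    ((measurableSet_lt h0 measurable_const).inter
      ((measurableSet_lt measurable_const h1).inter (measurableSet_lt h1 measurable_const))))

lemma wedgeBox_eq_preimage (a α L : ℝ) :
    wedgeBox a α L = wedgeM3 ⁻¹' (Ioo 0 α ×ˢ wedgeQ a L) := by
  ext p
  simp only [wedgeBox, wedgeQ, mem_setOf_eq, mem_preimage, mem_prod, mem_Ioo]
  constructor
  · rintro ⟨⟨h1, h2⟩, ⟨h3, h4⟩, h5, h6⟩
    exact ⟨⟨h3, h4⟩, h1, h2, h5, h6⟩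
  · rintro ⟨⟨h3, h4⟩, h1, h2, h5, h6⟩
    exact ⟨⟨h1, h2⟩, ⟨h3, h4⟩, h5, h6⟩

lemma wedgeTransfer {a α L : ℝ} (h : E3' → ENNReal) :
    ∫⁻ p in wedgeBox a α L, h p =
      ∫⁻ y, (Ioo 0 α ×ˢ wedgeQ a L).indicator (fun y => h (wedgeM3.symm y)) y := by
  rw [← lintegral_indicator (wedgeBox_measurable a α L)]
  rw [← wedgeM3_mp.map_eq, wedgeM3.measurableEmbedding.lintegral_map]
  congr 1
  funext p
  by_cases hp : p ∈ wedgeBox a α L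
  · have hp' : wedgeM3 p ∈ Ioo 0 α ×ˢ wedgeQ a L := by
      rw [wedgeBox_eq_preimage] at hp; exact hp
    rw [Set.indicator_of_mem hp', Set.indicator_of_mem hp, MeasurableEquiv.symm_apply_apply]
  · have hp' : wedgeM3 p ∉ Ioo 0 α ×ˢ wedgeQ a L := by
      rw [wedgeBox_eq_preimage] at hp; exact hp
    rw [Set.indicator_of_notMem hp', Set.indicator_of_notMem hp]

end HardyAux

/-- Hardy–Poincaré inequality on a wedge-shaped cylinder for functions vanishing on the face
`{(r, 0, z) : 0 ≤ r ≤ a, 0 ≤ z ≤ L}`, with constant depending only on the angle `α`. -/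
theorem hardy_poincare_wedge_cylinder (α : ℝ) (hα : 0 < α) (hα' : α < 2 * Real.pi) :
    ∃ C : ℝ, 0 < C ∧ ∀ a : ℝ, 0 < a → ∀ L : ℝ, 0 < L →
      ∀ u : EuclideanSpace ℝ (Fin 3) → ℝ,
      (∃ U : Set (EuclideanSpace ℝ (Fin 3)), IsOpen U ∧ closure (wedgeCylinder a α L) ⊆ U ∧
        ContDiffOn ℝ 1 u U) →
      (∀ r ∈ Icc (0 : ℝ) a, ∀ z ∈ Icc (0 : ℝ) L, u (WithLp.toLp 2 ![r, 0, z]) = 0) →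
      (∫⁻ x in wedgeCylinder a α L, ENNReal.ofReal (u x ^ 2 / (x 0 ^ 2 + x 1 ^ 2))) ≤
        ENNReal.ofReal C *
          ∫⁻ x in wedgeCylinder a α L, ENNReal.ofReal (‖gradient u x‖ ^ 2) := by
  refine ⟨4 * α ^ 2, by positivity, ?_⟩
  intro a ha L hL u hU' hbd
  obtain ⟨U, hU, hcl, hu⟩ := hU'
  -- replace the gradient by the Fréchet derivative
  have hgr : ∀ x : E3', ‖gradient u x‖ = ‖fderiv ℝ u x‖ := fun x =>
    (InnerProductSpace.toDual ℝ E3').symm.norm_map (fderiv ℝ u x)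
  simp only [hgr]
  -- change of variables to cylindrical coordinates
  have hs := wedgeBox_measurable a α L
  have hder : ∀ p ∈ wedgeBox a α L,
      HasFDerivWithinAt wedgePhi (wedgePhiDeriv p) (wedgeBox a α L) p :=
    fun p _ => (hasFDerivAt_wedgePhi p).hasFDerivWithinAt
  have hinj := injOn_wedgePhi (a := a) (L := L) hα'.le
  rw [wedge_eq_image a α L,
    lintegral_image_eq_lintegral_abs_det_fderiv_mul volume hs hder hinj,
    lintegral_image_eq_lintegral_abs_det_fderiv_mul volume hs hder hinj]
  -- simplify both integrands on the box
  have hPhi0 : ∀ p : E3', (wedgePhi p) 0 = p 0 * Real.cos (p 1) := fun p => rfl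
  have hPhi1 : ∀ p : E3', (wedgePhi p) 1 = p 0 * Real.sin (p 1) := fun p => rfl
  have hLHSeq : ∫⁻ p in wedgeBox a α L, ENNReal.ofReal |(wedgePhiDeriv p).det| *
      ENNReal.ofReal (u (wedgePhi p) ^ 2 / ((wedgePhi p) 0 ^ 2 + (wedgePhi p) 1 ^ 2)) =
      ∫⁻ p in wedgeBox a α L, ENNReal.ofReal (u (wedgePhi p) ^ 2 / p 0) := by
    apply setLIntegral_congr_fun hs
    intro p hp
    dsimp only
    have hp0 : 0 < p 0 := hp.1.1
    rw [wedgePhiDeriv_det, abs_of_pos hp0, hPhi0, hPhi1]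
    have hsum : (p 0 * Real.cos (p 1)) ^ 2 + (p 0 * Real.sin (p 1)) ^ 2 = (p 0) ^ 2 := by
      have := Real.sin_sq_add_cos_sq (p 1)
      linear_combination (p 0) ^ 2 * this
    rw [hsum, ← ENNReal.ofReal_mul hp0.le]
    congr 1
    field_simp
  have hRHSeq : ∫⁻ p in wedgeBox a α L, ENNReal.ofReal |(wedgePhiDeriv p).det| *
      ENNReal.ofReal (‖fderiv ℝ u (wedgePhi p)‖ ^ 2) =
      ∫⁻ p in wedgeBox a α L, ENNReal.ofReal (p 0 * ‖fderiv ℝ u (wedgePhi p)‖ ^ 2) := by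
    apply setLIntegral_congr_fun hs
    intro p hp
    dsimp only
    have hp0 : 0 < p 0 := hp.1.1
    rw [wedgePhiDeriv_det, abs_of_pos hp0, ← ENNReal.ofReal_mul hp0.le]
  rw [hLHSeq, hRHSeq]
  -- transfer to the product space and apply Tonelli
  set T : Set (ℝ × (Fin 2 → ℝ)) := Ioo 0 α ×ˢ wedgeQ a L with hT_def
  have hT : MeasurableSet T := measurableSet_Ioo.prod (wedgeQ_measurable a L)
  set F1 : E3' → ENNReal := fun p => ENNReal.ofReal (u (wedgePhi p) ^ 2 / p 0) with hF1_def
  set F2 : E3' → ENNReal := fun p =>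
    ENNReal.ofReal (p 0 * ‖fderiv ℝ u (wedgePhi p)‖ ^ 2) with hF2_def
  rw [show ∫⁻ p in wedgeBox a α L, ENNReal.ofReal (u (wedgePhi p) ^ 2 / p 0) =
      ∫⁻ y, T.indicator (fun y => F1 (wedgeM3.symm y)) y from wedgeTransfer F1,
    show ∫⁻ p in wedgeBox a α L, ENNReal.ofReal (p 0 * ‖fderiv ℝ u (wedgePhi p)‖ ^ 2) =
      ∫⁻ y, T.indicator (fun y => F2 (wedgeM3.symm y)) y from wedgeTransfer F2]
  -- measurability facts
  have hPhiMaps : MapsTo wedgePhi (wedgeBox a α L) U := by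
    intro p hp
    apply hcl
    apply subset_closure
    rw [wedge_eq_image a α L]
    exact mem_image_of_mem _ hp
  have hucont : ContinuousOn u U := hu.continuousOn
  have hfd_cont : ContinuousOn (fderiv ℝ u) U := hu.continuousOn_fderiv_of_isOpen hU le_rfl
  have hproj : ∀ i : Fin 3, Continuous (fun p : E3' => p i) := fun i =>
    (EuclideanSpace.proj (𝕜 := ℝ) i).continuous
  have hF1cont : ContinuousOn (fun p : E3' => u (wedgePhi p) ^ 2 / p 0) (wedgeBox a α L) := by
    apply ContinuousOn.div
    · exact ((hucont.comp wedgePhi_continuous.continuousOn hPhiMaps).pow 2)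
    · exact (hproj 0).continuousOn
    · exact fun p hp => hp.1.1.ne'
  have hF2cont : ContinuousOn (fun p : E3' => p 0 * ‖fderiv ℝ u (wedgePhi p)‖ ^ 2)
      (wedgeBox a α L) := by
    apply ContinuousOn.mul
    · exact (hproj 0).continuousOn
    · exact ((hfd_cont.comp wedgePhi_continuous.continuousOn hPhiMaps).norm.pow 2)
  have hpre : wedgeM3.symm ⁻¹' (wedgeBox a α L) = T := by
    rw [wedgeBox_eq_preimage, hT_def]
    ext y
    simp [MeasurableEquiv.apply_symm_apply, Set.mem_prod]
  have hqmp : MeasureTheory.Measure.QuasiMeasurePreserving wedgeM3.symm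
      (volume.restrict T) (volume.restrict (wedgeBox a α L)) := by
    have := (MeasurePreserving.symm wedgeM3 wedgeM3_mp).restrict_preimage (s := wedgeBox a α L) hs
    rw [hpre] at this
    exact this.quasiMeasurePreserving
  have hae1 : AEMeasurable (T.indicator (fun y => F1 (wedgeM3.symm y))) volume := by
    rw [aemeasurable_indicator_iff hT]
    exact ((hF1cont.aemeasurable hs).ennreal_ofReal).comp_quasiMeasurePreserving hqmp
  have hae2 : AEMeasurable (T.indicator (fun y => F2 (wedgeM3.symm y))) volume := by
    rw [aemeasurable_indicator_iff hT]
    exact ((hF2cont.aemeasurable hs).ennreal_ofReal).comp_quasiMeasurePreserving hqmp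
  rw [Measure.volume_eq_prod] at hae1 hae2 ⊢
  rw [lintegral_prod_symm _ hae1, lintegral_prod_symm _ hae2]
  rw [← lintegral_const_mul' (ENNReal.ofReal (4 * α ^ 2)) _ ENNReal.ofReal_ne_top]
  apply lintegral_mono
  intro q
  dsimp only
  by_cases hq : q ∈ wedgeQ a L
  · have hind1 : (fun θ => T.indicator (fun y => F1 (wedgeM3.symm y)) (θ, q)) =
        (Ioo 0 α).indicator (fun θ => F1 (wedgeM3.symm (θ, q))) := by
      funext θ
      by_cases hθ : θ ∈ Ioo (0:ℝ) α
      · rw [Set.indicator_of_mem (by exact ⟨hθ, hq⟩), Set.indicator_of_mem hθ]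
      · rw [Set.indicator_of_notMem (by simp [hT_def, hθ]), Set.indicator_of_notMem hθ]
    have hind2 : (fun θ => T.indicator (fun y => F2 (wedgeM3.symm y)) (θ, q)) =
        (Ioo 0 α).indicator (fun θ => F2 (wedgeM3.symm (θ, q))) := by
      funext θ
      by_cases hθ : θ ∈ Ioo (0:ℝ) α
      · rw [Set.indicator_of_mem (by exact ⟨hθ, hq⟩), Set.indicator_of_mem hθ]
      · rw [Set.indicator_of_notMem (by simp [hT_def, hθ]), Set.indicator_of_notMem hθ]
    rw [hind1, hind2, lintegral_indicator measurableSet_Ioo,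
      lintegral_indicator measurableSet_Ioo]
    have hr : q 0 ∈ Ioo 0 a := ⟨hq.1, hq.2.1⟩
    have hz : q 1 ∈ Ioo 0 L := ⟨hq.2.2.1, hq.2.2.2⟩
    exact wedgeSlice hα ha hL hU hcl hu hbd hr hz
  · have hz1 : (fun θ => T.indicator (fun y => F1 (wedgeM3.symm y)) (θ, q)) = fun _ => 0 := by
      funext θ
      rw [Set.indicator_of_notMem (by simp [hT_def, hq])]
    rw [hz1]
    simp
end

section
/- Let Ω ⊂ ℝⁿ be a bounded open set, let S ⊂ ∂Ω be a nonempty closed set, and let η(x) = dist(x, S). Let m ≤ μ be nonnegative integers, a ∈ ℝ, and let P be the differential operator P u = Σ_{|β| ≤ m} a_β ∂^β u, where each coefficient a_β : ℝⁿ → ℝ is smooth on an open neighborhood of the closure of Ω. Then there exists a constant C > 0 such that for every smooth function u : Ω → ℝ one has Σ_{|γ| ≤ μ−m} ∫_Ω η(x)^{2(|γ| − (a − m))} |∂^γ (P u)(x)|² dx ≤ C Σ_{|β| ≤ μ} ∫_Ω η(x)^{2(|β| − a)} |∂^β u(x)|² dx (an inequality in the extended nonnegative reals). In other words, P maps the weighted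 Sobolev space K^μ_a(Ω) continuously into K^{μ−m}_{a−m}(Ω). -/
open MeasureTheory Set Metric

noncomputable section

/-- Iterated partial derivative along a list of coordinate directions. -/
def derivAlong {n : ℕ} : List (Fin n) → (EuclideanSpace ℝ (Fin n) → ℝ) →
    EuclideanSpace ℝ (Fin n) → ℝ
  | [], u => u
  | i :: L, u => fun x => fderiv ℝ (derivAlong L u) x (EuclideanSpace.single i 1)

/-- The iterated partial derivative `∂^β` associated to a multi-index `β`. -/
def pderivMulti {n : ℕ} (β : Fin n → ℕ) (u : EuclideanSpace ℝ (Fin n) → ℝ) :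
    EuclideanSpace ℝ (Fin n) → ℝ :=
  derivAlong ((List.finRange n).flatMap fun i => List.replicate (β i) i) u

/-- The finite set of multi-indices `β : Fin n → ℕ` with `|β| = ∑ i, β i ≤ m`. -/
def multiIndicesLE (n m : ℕ) : Finset (Fin n → ℕ) :=
  ((Finset.univ : Finset (Fin n → Fin (m + 1))).filter
    (fun γ => ∑ i, (γ i : ℕ) ≤ m)).image (fun γ i => (γ i : ℕ))

/-- The differential operator `P u = ∑_{|β| ≤ m} a_β ∂^β u` with coefficients `a_β`. -/
def diffOp {n : ℕ} (m : ℕ) (a : (Fin n → ℕ) → EuclideanSpace ℝ (Fin n) → ℝ)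
    (u : EuclideanSpace ℝ (Fin n) → ℝ) : EuclideanSpace ℝ (Fin n) → ℝ :=
  fun x => ∑ β ∈ multiIndicesLE n m, a β x * pderivMulti β u x

variable {n : ℕ} {Ω : Set (EuclideanSpace ℝ (Fin n))}

theorem derivAlong_smoothOn (hΩ : IsOpen Ω) {u : EuclideanSpace ℝ (Fin n) → ℝ}
    (hu : ContDiffOn ℝ (⊤ : ℕ∞) u Ω) : ∀ L : List (Fin n), ContDiffOn ℝ (⊤ : ℕ∞) (derivAlong L u) Ω
  | [] => hu
  | i :: L => by
    show ContDiffOn ℝ (⊤ : ℕ∞) (fun x => fderiv ℝ (derivAlong L u) x (EuclideanSpace.single i 1)) Ω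
    exact ((derivAlong_smoothOn hΩ hu L).fderiv_of_isOpen hΩ (by simp)).clm_apply contDiffOn_const

theorem derivAlong_congrOn (hΩ : IsOpen Ω) {u v : EuclideanSpace ℝ (Fin n) → ℝ}
    (huv : EqOn u v Ω) : ∀ L : List (Fin n), EqOn (derivAlong L u) (derivAlong L v) Ω
  | [] => huv
  | i :: L => by
    intro x hx
    show fderiv ℝ (derivAlong L u) x _ = fderiv ℝ (derivAlong L v) x _
    have : fderiv ℝ (derivAlong L u) x = fderiv ℝ (derivAlong L v) x := by
      apply Filter.EventuallyEq.fderiv_eq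
      filter_upwards [hΩ.mem_nhds hx] with y hy using derivAlong_congrOn hΩ huv L hy
    rw [this]

theorem derivAlong_swap (hΩ : IsOpen Ω) {u : EuclideanSpace ℝ (Fin n) → ℝ}
    (hu : ContDiffOn ℝ (⊤ : ℕ∞) u Ω) (i j : Fin n) (L : List (Fin n)) :
    EqOn (derivAlong (i :: j :: L) u) (derivAlong (j :: i :: L) u) Ω := by
  intro x hx
  set g := derivAlong L u with hg
  have hgs : ContDiffOn ℝ (⊤ : ℕ∞) g Ω := derivAlong_smoothOn hΩ hu L
  have hsym : IsSymmSndFDerivAt ℝ g x :=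
    (hgs.contDiffAt (hΩ.mem_nhds hx)).isSymmSndFDerivAt (by rw [minSmoothness_of_isRCLikeNormedField]; exact WithTop.coe_le_coe.mpr (le_top : (2 : ℕ∞) ≤ ⊤))
  have hdiff : DifferentiableAt ℝ (fderiv ℝ g) x := by
    have h1 : ContDiffOn ℝ (⊤ : ℕ∞) (fderiv ℝ g) Ω := hgs.fderiv_of_isOpen hΩ (by simp)
    exact (h1.contDiffAt (hΩ.mem_nhds hx)).differentiableAt (by simp)
  have key : ∀ v w : EuclideanSpace ℝ (Fin n),
      fderiv ℝ (fun y => fderiv ℝ g y w) x v = fderiv ℝ (fderiv ℝ g) x v w := by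
    intro v w
    rw [fderiv_clm_apply hdiff (differentiableAt_const w)]
    simp
  show fderiv ℝ (fun y => fderiv ℝ g y (EuclideanSpace.single j 1)) x (EuclideanSpace.single i 1)
      = fderiv ℝ (fun y => fderiv ℝ g y (EuclideanSpace.single i 1)) x (EuclideanSpace.single j 1)
  rw [key, key, hsym]

theorem eqOn_fderiv_apply {f g : EuclideanSpace ℝ (Fin n) → ℝ} (hΩ : IsOpen Ω)
    (h : EqOn f g Ω) (v : EuclideanSpace ℝ (Fin n)) :
    EqOn (fun x => fderiv ℝ f x v) (fun x => fderiv ℝ g x v) Ω := by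
  intro x hx
  have : fderiv ℝ f x = fderiv ℝ g x := by
    apply Filter.EventuallyEq.fderiv_eq
    filter_upwards [hΩ.mem_nhds hx] with y hy using h hy
  simp only [this]

theorem derivAlong_perm (hΩ : IsOpen Ω) {u : EuclideanSpace ℝ (Fin n) → ℝ}
    (hu : ContDiffOn ℝ (⊤ : ℕ∞) u Ω) {L L' : List (Fin n)} (hp : L.Perm L') :
    EqOn (derivAlong L u) (derivAlong L' u) Ω := by
  induction hp with
  | nil => exact fun x _ => rfl
  | cons i _ ih => exact eqOn_fderiv_apply hΩ ih (EuclideanSpace.single i 1)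
  | swap i j L => exact derivAlong_swap hΩ hu j i L
  | trans _ _ ih1 ih2 => exact fun x hx => (ih1 hx).trans (ih2 hx)

def canonList (n : ℕ) (β : Fin n → ℕ) : List (Fin n) :=
  (List.finRange n).flatMap fun i => List.replicate (β i) i

theorem canonList_count (β : Fin n → ℕ) (i : Fin n) : (canonList n β).count i = β i := by
  unfold canonList
  rw [List.count_flatMap]
  have : ∀ j : Fin n, (List.count i ∘ fun i => List.replicate (β i) i) j
      = if i = j then β j else 0 := by
    intro j
    simp only [Function.comp_apply, List.count_replicate]
    by_cases h : i = j
    · subst h; simp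
    · rw [if_neg h, if_neg (by simpa [beq_iff_eq] using Ne.symm h)]
  rw [List.map_congr_left (fun j _ => this j)]
  rw [← Fin.sum_univ_def]
  rw [Finset.sum_ite_eq (Finset.univ : Finset (Fin n)) i β]
  simp

theorem canonList_length (β : Fin n → ℕ) : (canonList n β).length = ∑ i, β i := by
  unfold canonList
  rw [List.length_flatMap, ← Fin.sum_univ_def]
  simp

theorem sum_count_eq_length (L : List (Fin n)) : ∑ i, L.count i = L.length := by
  induction L with
  | nil => simp
  | cons j L ih =>
    simp only [List.count_cons, List.length_cons, Finset.sum_add_distrib, ih]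
    simp

theorem perm_canonList (L : List (Fin n)) : L.Perm (canonList n (fun i => L.count i)) := by
  rw [List.perm_iff_count]
  intro i
  rw [canonList_count]

theorem mem_multiIndicesLE {m : ℕ} {β : Fin n → ℕ} :
    β ∈ multiIndicesLE n m ↔ ∑ i, β i ≤ m := by
  unfold multiIndicesLE
  constructor
  · rintro hβ
    simp only [Finset.mem_image, Finset.mem_filter, Finset.mem_univ, true_and] at hβ
    obtain ⟨γ, hγ, rfl⟩ := hβ
    exact hγ
  · intro hβ
    simp only [Finset.mem_image, Finset.mem_filter, Finset.mem_univ, true_and]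
    refine ⟨fun i => ⟨β i, ?_⟩, ?_, ?_⟩
    · exact Nat.lt_succ_of_le (le_trans (Finset.single_le_sum (f := β) (fun i _ => Nat.zero_le _) (Finset.mem_univ i)) hβ)
    · simpa using hβ
    · rfl

theorem pderivMulti_eq_canon {β : Fin n → ℕ} {u : EuclideanSpace ℝ (Fin n) → ℝ} :
    pderivMulti β u = derivAlong (canonList n β) u := rfl

/-- An operator representable as a finite combination `∑ c_j ∂_{L_j}` with smooth
coefficients and derivative-lists of length at most `k`. -/
def GoodOp (Ω U : Set (EuclideanSpace ℝ (Fin n))) (k : ℕ)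
    (A : (EuclideanSpace ℝ (Fin n) → ℝ) → EuclideanSpace ℝ (Fin n) → ℝ) : Prop :=
  ∃ (N : ℕ) (c : ℕ → EuclideanSpace ℝ (Fin n) → ℝ) (L : ℕ → List (Fin n)),
    (∀ j, ContDiffOn ℝ (⊤ : ℕ∞) (c j) U) ∧ (∀ j, (L j).length ≤ k) ∧
    ∀ u : EuclideanSpace ℝ (Fin n) → ℝ, ContDiffOn ℝ (⊤ : ℕ∞) u Ω → ∀ x ∈ Ω, A u x =
      ∑ j ∈ Finset.range N, c j x * derivAlong (L j) u x

theorem GoodOp.mono {Ω U : Set (EuclideanSpace ℝ (Fin n))} {k k' : ℕ} (hkk : k ≤ k')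
    {A : (EuclideanSpace ℝ (Fin n) → ℝ) → EuclideanSpace ℝ (Fin n) → ℝ}
    (h : GoodOp Ω U k A) : GoodOp Ω U k' A := by
  obtain ⟨N, c, L, h1, h2, h3⟩ := h
  exact ⟨N, c, L, h1, fun j => (h2 j).trans hkk, h3⟩

theorem GoodOp.step {Ω U : Set (EuclideanSpace ℝ (Fin n))} (hΩ : IsOpen Ω) (hU : IsOpen U)
    (hΩU : Ω ⊆ U) {k : ℕ}
    {A : (EuclideanSpace ℝ (Fin n) → ℝ) → EuclideanSpace ℝ (Fin n) → ℝ}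
    (h : GoodOp Ω U k A) (i : Fin n) :
    GoodOp Ω U (k + 1)
      (fun u x => fderiv ℝ (A u) x (EuclideanSpace.single i 1)) := by
  obtain ⟨N, c, L, h1, h2, h3⟩ := h
  refine ⟨N + N, fun j => if j < N then (fun x => fderiv ℝ (c j) x (EuclideanSpace.single i 1))
      else c (j - N),
    fun j => if j < N then L j else i :: L (j - N), ?_, ?_, ?_⟩
  · intro j
    by_cases hj : j < N
    · simp only [if_pos hj]
      exact ((h1 j).fderiv_of_isOpen hU (by simp)).clm_apply contDiffOn_const
    · simp only [if_neg hj]; exact h1 _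
  · intro j
    by_cases hj : j < N
    · simp only [if_pos hj]
      exact (h2 _).trans (Nat.le_succ k)
    · simp only [if_neg hj, List.length_cons]
      exact Nat.succ_le_succ (h2 _)
  · intro u hu x hx
    have hsum : ∀ y ∈ Ω, A u y = ∑ j ∈ Finset.range N, c j y * derivAlong (L j) u y :=
      h3 u hu
    have hfe : fderiv ℝ (A u) x =
        fderiv ℝ (fun y => ∑ j ∈ Finset.range N, c j y * derivAlong (L j) u y) x := by
      apply Filter.EventuallyEq.fderiv_eq
      filter_upwards [hΩ.mem_nhds hx] with y hy using hsum y hy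
    have hdc : ∀ j, DifferentiableAt ℝ (c j) x := fun j =>
      ((h1 j).contDiffAt (hU.mem_nhds (hΩU hx))).differentiableAt (by simp)
    have hdt : ∀ (L' : List (Fin n)), DifferentiableAt ℝ (derivAlong L' u) x := fun L' =>
      ((derivAlong_smoothOn hΩ hu L').contDiffAt (hΩ.mem_nhds hx)).differentiableAt (by simp)
    show fderiv ℝ (A u) x (EuclideanSpace.single i 1) = _
    rw [hfe, fderiv_fun_sum (A := fun j y => c j y * derivAlong (L j) u y) (fun j _ => ((hdc j).mul (hdt (L j))))]
    rw [ContinuousLinearMap.sum_apply]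
    have hterm : ∀ j ∈ Finset.range N,
        fderiv ℝ (fun y => c j y * derivAlong (L j) u y) x (EuclideanSpace.single i 1)
          = fderiv ℝ (c j) x (EuclideanSpace.single i 1) * derivAlong (L j) u x
            + c j x * derivAlong (i :: L j) u x := by
      intro j _
      rw [fderiv_fun_mul (hdc j) (hdt (L j))]
      show (c j x • fderiv ℝ (derivAlong (L j) u) x
          + derivAlong (L j) u x • fderiv ℝ (c j) x) (EuclideanSpace.single i 1) = _
      simp only [ContinuousLinearMap.add_apply, ContinuousLinearMap.smul_apply, smul_eq_mul]
      show c j x * derivAlong (i :: L j) u x + _ = _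
      ring
    rw [Finset.sum_congr rfl hterm, Finset.sum_add_distrib, Finset.sum_range_add]
    congr 1
    · apply Finset.sum_congr rfl
      intro j hj
      have hj' := Finset.mem_range.mp hj
      simp [if_pos hj']
    · apply Finset.sum_congr rfl
      intro j _
      have h1' : ¬ (N + j < N) := by omega
      simp [if_neg h1', Nat.add_sub_cancel_left]

theorem list_map_sum_eq_range {α M : Type*} [AddCommMonoid M] (l : List α) (d : α) (g : α → M) :
    (l.map g).sum = ∑ j ∈ Finset.range l.length, g (l.getD j d) := by
  induction l with
  | nil => simp
  | cons a l ih =>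
    rw [List.map_cons, List.sum_cons, List.length_cons, Finset.sum_range_succ', ih]
    simp [add_comm]

theorem goodOp_diffOp {Ω U : Set (EuclideanSpace ℝ (Fin n))} {m : ℕ}
    {coeff : (Fin n → ℕ) → EuclideanSpace ℝ (Fin n) → ℝ}
    (hcoeff : ∀ β, ContDiffOn ℝ (⊤ : ℕ∞) (coeff β) U) :
    GoodOp Ω U m (diffOp m coeff) := by
  classical
  set l := (multiIndicesLE n m).toList with hl
  refine ⟨l.length, fun j => coeff (l.getD j 0), fun j => canonList n (l.getD j 0),
    fun j => hcoeff _, ?_, ?_⟩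
  · intro j
    rw [canonList_length]
    by_cases hj : j < l.length
    · have hmem : l.getD j 0 ∈ multiIndicesLE n m := by
        rw [List.getD_eq_getElem l 0 hj]
        exact Finset.mem_toList.mp (List.getElem_mem hj)
      exact mem_multiIndicesLE.mp hmem
    · rw [List.getD_eq_default l 0 (not_lt.mp hj)]
      simp
  · intro u hu x hx
    show ∑ β ∈ multiIndicesLE n m, coeff β x * pderivMulti β u x = _
    rw [← Finset.sum_map_toList, list_map_sum_eq_range l 0 (fun β => coeff β x * pderivMulti β u x)]
    rfl

theorem goodOp_derivAlong {Ω U : Set (EuclideanSpace ℝ (Fin n))} (hΩ : IsOpen Ω)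
    (hU : IsOpen U) (hΩU : Ω ⊆ U) {k : ℕ}
    {A : (EuclideanSpace ℝ (Fin n) → ℝ) → EuclideanSpace ℝ (Fin n) → ℝ}
    (h : GoodOp Ω U k A) :
    ∀ L : List (Fin n), GoodOp Ω U (k + L.length) (fun u => derivAlong L (A u))
  | [] => h
  | i :: L => by
    have h1 := (goodOp_derivAlong hΩ hU hΩU h L).step hΩ hU hΩU i
    have h2 : GoodOp Ω U (k + (i :: L).length)
        (fun u x => fderiv ℝ (derivAlong L (A u)) x (EuclideanSpace.single i 1)) := by
      have : k + L.length + 1 = k + (i :: L).length := by simp [Nat.add_assoc]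
      rw [← this]; exact h1
    exact h2

theorem key_estimate {Ω U S : Set (EuclideanSpace ℝ (Fin n))}
    (hΩo : IsOpen Ω) (hΩb : Bornology.IsBounded Ω)
    (hSc : IsClosed S) (hSne : S.Nonempty) (hSsub : S ⊆ frontier Ω)
    {m μ : ℕ} (hmμ : m ≤ μ) {a : ℝ}
    {coeff : (Fin n → ℕ) → EuclideanSpace ℝ (Fin n) → ℝ}
    (hUo : IsOpen U) (hUc : closure Ω ⊆ U)
    (hcoeff : ∀ β, ContDiffOn ℝ (⊤ : ℕ∞) (coeff β) U)
    (γ : Fin n → ℕ) (hγ : ∑ i, γ i ≤ μ - m) :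
    ∃ Cγ : ℝ, 0 ≤ Cγ ∧ ∀ u : EuclideanSpace ℝ (Fin n) → ℝ, ContDiffOn ℝ (⊤ : ℕ∞) u Ω →
      (∫⁻ x in Ω, ENNReal.ofReal (infDist x S ^ (2 * (((∑ i, γ i : ℕ) : ℝ) - (a - (m : ℝ)))) *
          pderivMulti γ (diffOp m coeff u) x ^ 2)) ≤
        ENNReal.ofReal Cγ * ∑ β ∈ multiIndicesLE n μ, ∫⁻ x in Ω,
          ENNReal.ofReal (infDist x S ^ (2 * (((∑ i, β i : ℕ) : ℝ) - a)) *
            pderivMulti β u x ^ 2) := by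
  classical
  have hΩU : Ω ⊆ U := subset_closure.trans hUc
  have hΩm : MeasurableSet Ω := hΩo.measurableSet
  -- positivity of the weight on Ω
  have hpos : ∀ x ∈ Ω, 0 < infDist x S := by
    intro x hx
    refine (hSc.notMem_iff_infDist_pos hSne).mp ?_
    intro hxS
    have := hSsub hxS
    rw [hΩo.frontier_eq] at this
    exact this.2 hx
  -- upper bound for the weight
  obtain ⟨s₀, hs₀⟩ := hSne
  obtain ⟨r, hr⟩ := hΩb.subset_closedBall s₀
  set K : ℝ := max 1 r with hK
  have hK1 : (1 : ℝ) ≤ K := le_max_left 1 r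
  have hηK : ∀ x ∈ Ω, infDist x S ≤ K := fun x hx =>
    le_trans (infDist_le_dist_of_mem hs₀) (le_trans (hr hx) (le_max_right 1 r))
  set W : ℝ := K ^ (2 * (μ : ℝ)) with hWdef
  have hW0 : 0 ≤ W := Real.rpow_nonneg (le_trans zero_le_one hK1) _
  -- the representation of ∂^γ ∘ P
  obtain ⟨N, c, Lf, h1, h2, h3⟩ :=
    goodOp_derivAlong hΩo hUo hΩU (goodOp_diffOp (Ω := Ω) (m := m) hcoeff) (canonList n γ)
  have hlen : ∀ j, (Lf j).length ≤ μ := by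
    intro j
    have hA : (Lf j).length ≤ m + (canonList n γ).length := h2 j
    have hγ' : (canonList n γ).length ≤ μ - m := by
      rw [canonList_length]; exact hγ
    omega
  -- bounds for the coefficients
  have hM : ∀ j, ∃ M : ℝ, 0 ≤ M ∧ ∀ x ∈ Ω, |c j x| ≤ M := by
    intro j
    have hcl : IsCompact (closure Ω) := hΩb.isCompact_closure
    obtain ⟨M, hMb⟩ := hcl.exists_bound_of_continuousOn (((h1 j).continuousOn).mono hUc)
    exact ⟨max M 0, le_max_right M 0, fun x hx =>
      le_trans (hMb x (subset_closure hx)) (le_max_left M 0)⟩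
  choose M hM0 hMb using hM
  refine ⟨∑ j ∈ Finset.range N, (N : ℝ) * M j ^ 2 * W, Finset.sum_nonneg
    (fun j _ => by positivity), ?_⟩
  intro u hu
  set RHSu := ∑ β ∈ multiIndicesLE n μ, ∫⁻ x in Ω,
      ENNReal.ofReal (infDist x S ^ (2 * (((∑ i, β i : ℕ) : ℝ) - a)) *
        pderivMulti β u x ^ 2) with hRHSu
  set E : ℝ := 2 * (((∑ i, γ i : ℕ) : ℝ) - (a - (m : ℝ))) with hE
  set g : ℕ → EuclideanSpace ℝ (Fin n) → ℝ := fun j x =>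
    ((N : ℝ) * M j ^ 2 * W) * (infDist x S ^ (2 * (((Lf j).length : ℝ) - a)) *
      derivAlong (Lf j) u x ^ 2) with hg
  -- pointwise estimate
  have hpoint : ∀ x ∈ Ω, infDist x S ^ E * pderivMulti γ (diffOp m coeff u) x ^ 2 ≤
      ∑ j ∈ Finset.range N, g j x := by
    intro x hx
    set η : ℝ := infDist x S with hηdef
    have hη : 0 < η := hpos x hx
    have hηE : 0 ≤ η ^ E := Real.rpow_nonneg hη.le _
    have hfx : pderivMulti γ (diffOp m coeff u) x =
        ∑ j ∈ Finset.range N, c j x * derivAlong (Lf j) u x := h3 u hu x hx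
    have hCS : pderivMulti γ (diffOp m coeff u) x ^ 2 ≤
        (N : ℝ) * ∑ j ∈ Finset.range N, (c j x * derivAlong (Lf j) u x) ^ 2 := by
      rw [hfx]
      have h := sq_sum_le_card_mul_sum_sq
        (s := Finset.range N) (f := fun j => c j x * derivAlong (Lf j) u x)
      simpa using h
    calc η ^ E * pderivMulti γ (diffOp m coeff u) x ^ 2
        ≤ η ^ E * ((N : ℝ) * ∑ j ∈ Finset.range N, (c j x * derivAlong (Lf j) u x) ^ 2) :=
          mul_le_mul_of_nonneg_left hCS hηE
      _ = ∑ j ∈ Finset.range N, η ^ E * ((N : ℝ) * (c j x * derivAlong (Lf j) u x) ^ 2) := by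
          rw [Finset.mul_sum, Finset.mul_sum]
      _ ≤ ∑ j ∈ Finset.range N, g j x := by
          apply Finset.sum_le_sum
          intro j _
          set e : ℝ := 2 * (((Lf j).length : ℝ) - a) with hedef
          set d : ℝ := E - e with hddef
          have hd0 : 0 ≤ d := by
            have hA : ((Lf j).length : ℝ) ≤ (m : ℝ) + ((∑ i, γ i : ℕ) : ℝ) := by
              have h' : (Lf j).length ≤ m + ∑ i, γ i := by
                have := h2 j
                rw [canonList_length] at this
                exact this
              exact_mod_cast h'
            simp only [hddef, hedef, hE]
            linarith
          have hd2μ : d ≤ 2 * (μ : ℝ) := by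
            have h' : (∑ i, γ i) + m ≤ μ := by omega
            have h'' : ((∑ i, γ i : ℕ) : ℝ) + (m : ℝ) ≤ (μ : ℝ) := by exact_mod_cast h'
            have hlen0 : (0 : ℝ) ≤ ((Lf j).length : ℝ) := by positivity
            simp only [hddef, hedef, hE]
            linarith
          have hEe : η ^ E ≤ W * η ^ e := by
            have hsplit : η ^ E = η ^ e * η ^ d := by
              rw [← Real.rpow_add hη]
              congr 1
              simp [hddef]
            rw [hsplit, mul_comm]
            apply mul_le_mul_of_nonneg_right _ (Real.rpow_nonneg hη.le _)
            calc η ^ d ≤ K ^ d := Real.rpow_le_rpow hη.le (hηK x hx) hd0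
              _ ≤ K ^ (2 * (μ : ℝ)) :=
                  Real.rpow_le_rpow_of_exponent_le hK1 hd2μ
          have hc2 : (c j x) ^ 2 ≤ (M j) ^ 2 := by
            have := hMb j x hx
            nlinarith [abs_nonneg (c j x), sq_abs (c j x)]
          have hee : 0 ≤ η ^ e := Real.rpow_nonneg hη.le _
          calc η ^ E * ((N : ℝ) * (c j x * derivAlong (Lf j) u x) ^ 2)
              = ((N : ℝ) * derivAlong (Lf j) u x ^ 2) * ((c j x) ^ 2 * η ^ E) := by ring
            _ ≤ ((N : ℝ) * derivAlong (Lf j) u x ^ 2) * ((M j) ^ 2 * (W * η ^ e)) := by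
                apply mul_le_mul_of_nonneg_left _ (by positivity)
                exact mul_le_mul hc2 hEe hηE (sq_nonneg _)
            _ = g j x := by simp only [hg]; ring
  -- nonnegativity of g
  have hgnn : ∀ j x, 0 ≤ g j x := by
    intro j x
    have h0 : (0:ℝ) ≤ infDist x S ^ (2 * (((Lf j).length : ℝ) - a)) :=
      Real.rpow_nonneg infDist_nonneg _
    positivity
  -- measurability of g on Ω
  have hgm : ∀ j, AEMeasurable (fun x => ENNReal.ofReal (g j x))
      (MeasureTheory.volume.restrict Ω) := by
    intro j
    have hηc : ContinuousOn (fun x => infDist x S ^ (2 * (((Lf j).length : ℝ) - a))) Ω :=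
      (continuous_infDist_pt S).continuousOn.rpow_const
        (fun x hx => Or.inl (ne_of_gt (hpos x hx)))
    have htc : ContinuousOn (derivAlong (Lf j) u) Ω :=
      (derivAlong_smoothOn hΩo hu (Lf j)).continuousOn
    have : ContinuousOn (g j) Ω := continuousOn_const.mul (hηc.mul (htc.pow 2))
    exact (ENNReal.continuous_ofReal.comp_continuousOn this).aemeasurable hΩm
  -- per-term integral estimate
  have hterm : ∀ j ∈ Finset.range N, (∫⁻ x in Ω, ENNReal.ofReal (g j x)) ≤
      ENNReal.ofReal ((N : ℝ) * M j ^ 2 * W) * RHSu := by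
    intro j _
    have hKj : (0:ℝ) ≤ (N : ℝ) * M j ^ 2 * W := by positivity
    have hsplit : ∀ x : EuclideanSpace ℝ (Fin n), ENNReal.ofReal (g j x) =
        ENNReal.ofReal ((N : ℝ) * M j ^ 2 * W) *
          ENNReal.ofReal (infDist x S ^ (2 * (((Lf j).length : ℝ) - a)) *
            derivAlong (Lf j) u x ^ 2) := fun x => ENNReal.ofReal_mul hKj
    rw [lintegral_congr hsplit, lintegral_const_mul' _ _ ENNReal.ofReal_ne_top]
    apply mul_le_mul_right
    set β : Fin n → ℕ := fun i => (Lf j).count i with hβdef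
    have hperm : Set.EqOn (derivAlong (Lf j) u) (pderivMulti β u) Ω := by
      rw [pderivMulti_eq_canon]
      exact derivAlong_perm hΩo hu (perm_canonList (Lf j))
    have hsumβ : (∑ i, β i) = (Lf j).length := sum_count_eq_length _
    have hmem : β ∈ multiIndicesLE n μ := mem_multiIndicesLE.mpr (hsumβ ▸ hlen j)
    have hcast : ((∑ i, β i : ℕ) : ℝ) = ((Lf j).length : ℝ) := by exact_mod_cast hsumβ
    have hint : (∫⁻ x in Ω, ENNReal.ofReal (infDist x S ^ (2 * (((Lf j).length : ℝ) - a)) *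
        derivAlong (Lf j) u x ^ 2)) = ∫⁻ x in Ω,
          ENNReal.ofReal (infDist x S ^ (2 * (((∑ i, β i : ℕ) : ℝ) - a)) *
            pderivMulti β u x ^ 2) := by
      apply setLIntegral_congr_fun hΩm
      intro x hx
      beta_reduce
      rw [hcast, hperm hx]
    rw [hint, hRHSu]
    exact Finset.single_le_sum (f := fun β => ∫⁻ x in Ω,
      ENNReal.ofReal (infDist x S ^ (2 * (((∑ i, β i : ℕ) : ℝ) - a)) *
        pderivMulti β u x ^ 2)) (fun b _ => by simp) hmem
  calc (∫⁻ x in Ω, ENNReal.ofReal (infDist x S ^ E *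
          pderivMulti γ (diffOp m coeff u) x ^ 2))
      ≤ ∫⁻ x in Ω, ENNReal.ofReal (∑ j ∈ Finset.range N, g j x) :=
        setLIntegral_mono' hΩm (fun x hx => ENNReal.ofReal_le_ofReal (hpoint x hx))
    _ = ∫⁻ x in Ω, ∑ j ∈ Finset.range N, ENNReal.ofReal (g j x) := by
        apply lintegral_congr
        intro x
        exact ENNReal.ofReal_sum_of_nonneg (fun j _ => hgnn j x)
    _ = ∑ j ∈ Finset.range N, ∫⁻ x in Ω, ENNReal.ofReal (g j x) :=
        lintegral_finset_sum' _ (fun j _ => hgm j)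
    _ ≤ ∑ j ∈ Finset.range N, ENNReal.ofReal ((N : ℝ) * M j ^ 2 * W) * RHSu :=
        Finset.sum_le_sum hterm
    _ = (∑ j ∈ Finset.range N, ENNReal.ofReal ((N : ℝ) * M j ^ 2 * W)) * RHSu :=
        (Finset.sum_mul _ _ _).symm
    _ = ENNReal.ofReal (∑ j ∈ Finset.range N, (N : ℝ) * M j ^ 2 * W) * RHSu := by
        rw [ENNReal.ofReal_sum_of_nonneg (fun j _ => by positivity)]

/-- A differential operator of order `m` with coefficients smooth in a neighborhood of the
closure of `Ω` maps `K^μ_a(Ω)` continuously into `K^{μ-m}_{a-m}(Ω)`. -/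
theorem diffOp_mapsTo_weighted_sobolev {n : ℕ} (Ω : Set (EuclideanSpace ℝ (Fin n)))
    (hΩo : IsOpen Ω) (hΩb : Bornology.IsBounded Ω)
    (S : Set (EuclideanSpace ℝ (Fin n))) (hSc : IsClosed S) (hSne : S.Nonempty)
    (hSsub : S ⊆ frontier Ω) (m μ : ℕ) (hmμ : m ≤ μ) (a : ℝ)
    (coeff : (Fin n → ℕ) → EuclideanSpace ℝ (Fin n) → ℝ)
    (U : Set (EuclideanSpace ℝ (Fin n))) (hUo : IsOpen U) (hUc : closure Ω ⊆ U)
    (hcoeff : ∀ β, ContDiffOn ℝ (⊤ : ℕ∞) (coeff β) U) :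
    ∃ C : ℝ, 0 < C ∧ ∀ u : EuclideanSpace ℝ (Fin n) → ℝ, ContDiffOn ℝ (⊤ : ℕ∞) u Ω →
      (∑ γ ∈ multiIndicesLE n (μ - m), ∫⁻ x in Ω,
          ENNReal.ofReal (infDist x S ^ (2 * (((∑ i, γ i : ℕ) : ℝ) - (a - (m : ℝ)))) *
            pderivMulti γ (diffOp m coeff u) x ^ 2)) ≤
        ENNReal.ofReal C * ∑ β ∈ multiIndicesLE n μ, ∫⁻ x in Ω,
          ENNReal.ofReal (infDist x S ^ (2 * (((∑ i, β i : ℕ) : ℝ) - a)) *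
            pderivMulti β u x ^ 2) := by
  classical
  have key : ∀ γ : Fin n → ℕ, γ ∈ multiIndicesLE n (μ - m) →
      ∃ Cγ : ℝ, 0 ≤ Cγ ∧ ∀ u : EuclideanSpace ℝ (Fin n) → ℝ, ContDiffOn ℝ (⊤ : ℕ∞) u Ω →
        (∫⁻ x in Ω, ENNReal.ofReal
            (infDist x S ^ (2 * (((∑ i, γ i : ℕ) : ℝ) - (a - (m : ℝ)))) *
              pderivMulti γ (diffOp m coeff u) x ^ 2)) ≤
          ENNReal.ofReal Cγ * ∑ β ∈ multiIndicesLE n μ, ∫⁻ x in Ω,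
            ENNReal.ofReal (infDist x S ^ (2 * (((∑ i, β i : ℕ) : ℝ) - a)) *
              pderivMulti β u x ^ 2) := fun γ hγ =>
    key_estimate hΩo hΩb hSc hSne hSsub hmμ hUo hUc hcoeff γ (mem_multiIndicesLE.mp hγ)
  choose! Cγ hCγ0 hCγ using key
  refine ⟨1 + ∑ γ ∈ multiIndicesLE n (μ - m), Cγ γ, by
    have := Finset.sum_nonneg (fun γ hγ => hCγ0 γ hγ); linarith, ?_⟩
  intro u hu
  calc (∑ γ ∈ multiIndicesLE n (μ - m), ∫⁻ x in Ω,
        ENNReal.ofReal (infDist x S ^ (2 * (((∑ i, γ i : ℕ) : ℝ) - (a - (m : ℝ)))) *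
          pderivMulti γ (diffOp m coeff u) x ^ 2))
      ≤ ∑ γ ∈ multiIndicesLE n (μ - m), ENNReal.ofReal (Cγ γ) *
          ∑ β ∈ multiIndicesLE n μ, ∫⁻ x in Ω,
            ENNReal.ofReal (infDist x S ^ (2 * (((∑ i, β i : ℕ) : ℝ) - a)) *
              pderivMulti β u x ^ 2) :=
        Finset.sum_le_sum (fun γ hγ => hCγ γ hγ u hu)
    _ = ENNReal.ofReal (∑ γ ∈ multiIndicesLE n (μ - m), Cγ γ) *
          ∑ β ∈ multiIndicesLE n μ, ∫⁻ x in Ω,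
            ENNReal.ofReal (infDist x S ^ (2 * (((∑ i, β i : ℕ) : ℝ) - a)) *
              pderivMulti β u x ^ 2) := by
        rw [← Finset.sum_mul, ENNReal.ofReal_sum_of_nonneg (fun γ hγ => hCγ0 γ hγ)]
    _ ≤ ENNReal.ofReal (1 + ∑ γ ∈ multiIndicesLE n (μ - m), Cγ γ) *
          ∑ β ∈ multiIndicesLE n μ, ∫⁻ x in Ω,
            ENNReal.ofReal (infDist x S ^ (2 * (((∑ i, β i : ℕ) : ℝ) - a)) *
              pderivMulti β u x ^ 2) :=
        mul_le_mul_left (ENNReal.ofReal_le_ofReal (by linarith)) _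
end
end
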